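/- arXiv:2510.05298 — 8 statements merged into one kernel-verified Lean document; each statement's English description precedes it below -/
import Mathlib

section
/- (Linear lower bound in the 0 < q < 1 regime.) If 0 < q < 1, then almost surely there exist a constant D and a natural number N (which may depend on the sample point) such that for all n ≥ N, X_n ≥ n − D. -/
open MeasureTheory Filter Topology

/-- `X` is a Markov chain on `ℕ` with `X 0 = 0` and transition probabilities
`T(i, i+1) = 1/(q^i + 1)`, `T(i, i) = q^i/(q^i + 1)`, `T(i, j) = 0` otherwise,
encoded by conditioning on every finite path. -/
def IsQChain {Ω : Type*} [MeasurableSpace Ω] (P : Measure Ω)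
    (X : ℕ → Ω → ℕ) (q : ℝ) : Prop :=
  (∀ n, Measurable (X n)) ∧
  (∀ᵐ ω ∂P, X 0 ω = 0) ∧
  ∀ (n : ℕ) (f : ℕ → ℕ),
    P {ω | (∀ k ≤ n, X k ω = f k) ∧ X (n + 1) ω = f n + 1}
      = ENNReal.ofReal (1 / (q ^ f n + 1)) * P {ω | ∀ k ≤ n, X k ω = f k} ∧
    P {ω | (∀ k ≤ n, X k ω = f k) ∧ X (n + 1) ω = f n}
      = ENNReal.ofReal (q ^ f n / (q ^ f n + 1)) * P {ω | ∀ k ≤ n, X k ω = f k} ∧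
    ∀ j : ℕ, j ≠ f n → j ≠ f n + 1 →
      P {ω | (∀ k ≤ n, X k ω = f k) ∧ X (n + 1) ω = j} = 0

namespace QAux

variable {Ω : Type*} [MeasurableSpace Ω] {P : Measure Ω} {X : ℕ → Ω → ℕ} {q : ℝ}

noncomputable def Tq (q : ℝ) (i j : ℕ) : ℝ :=
  if j = i + 1 then 1 / (q ^ i + 1) else if j = i then q ^ i / (q ^ i + 1) else 0

lemma key (hX : IsQChain P X q) (n i j : ℕ) (Q : (ℕ → ℕ) → Prop)
    (hQ : ∀ f g : ℕ → ℕ, (∀ k ≤ n, f k = g k) → Q f → Q g)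
    (hQi : ∀ f, Q f → f n = i) :
    P {ω | Q (fun k => X k ω) ∧ X (n + 1) ω = j}
      = ENNReal.ofReal (Tq q i j) * P {ω | Q (fun k => X k ω)} := by
  classical
  obtain ⟨hm, -, ht⟩ := hX
  set B : Set Ω := {ω | X (n + 1) ω = j} with hB
  set ext : (Fin (n + 1) → ℕ) → ℕ → ℕ :=
    fun v k => if h : k < n + 1 then v ⟨k, h⟩ else 0 with hextdef
  have hext : ∀ (v : Fin (n+1) → ℕ) (k : Fin (n+1)), ext v k = v k := by
    intro v k
    simp only [hextdef]
    rw [dif_pos k.isLt]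
  set ι := {v : Fin (n + 1) → ℕ // Q (ext v)} with hι
  set C : ι → Set Ω := fun v => {ω | ∀ k ≤ n, X k ω = ext v.1 k} with hC
  have hCm : ∀ v, MeasurableSet (C v) := by
    intro v
    have h1 : C v = ⋂ k, ⋂ (_ : k ≤ n), (X k) ⁻¹' {ext v.1 k} := by
      ext ω; simp [hC, Set.mem_iInter]
    rw [h1]
    exact MeasurableSet.iInter fun k => MeasurableSet.iInter fun _ =>
      hm k (measurableSet_singleton _)
  have hCdisj : Pairwise (Function.onFun Disjoint C) := by
    intro v w hvw
    rw [Function.onFun, Set.disjoint_left]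
    intro ω hv hw
    apply hvw
    apply Subtype.ext; funext k
    have h1 := hv k (by omega : (k:ℕ) ≤ n)
    have h2 := hw k (by omega : (k:ℕ) ≤ n)
    have e1 : ext v.1 (k : ℕ) = v.1 k := by
      simpa using hext v.1 k
    have e2 : ext w.1 (k : ℕ) = w.1 k := by
      simpa using hext w.1 k
    rw [e1] at h1; rw [e2] at h2
    omega
  have hA : {ω | Q (fun k => X k ω)} = ⋃ v : ι, C v := by
    ext ω
    simp only [Set.mem_setOf_eq, Set.mem_iUnion]
    constructor
    · intro hQω
      refine ⟨⟨fun k => X k ω, ?_⟩, ?_⟩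
      · exact hQ _ _ (fun k hk => by
          rw [hextdef]; simp only []; rw [dif_pos (by omega : k < n + 1)]) hQω
      · intro k hk
        simp only [hC, hextdef, Set.mem_setOf_eq]
        rw [dif_pos (by omega : k < n + 1)]
    · rintro ⟨v, hv⟩
      exact hQ (ext v.1) _ (fun k hk => (hv k hk).symm) v.2
  have hsplit : {ω | Q (fun k => X k ω) ∧ X (n + 1) ω = j} = ⋃ v : ι, (C v ∩ B) := by
    have : {ω | Q (fun k => X k ω) ∧ X (n + 1) ω = j} = {ω | Q (fun k => X k ω)} ∩ B := rfl
    rw [this, hA, Set.iUnion_inter]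
  have hper : ∀ v : ι, P (C v ∩ B) = ENNReal.ofReal (Tq q i j) * P (C v) := by
    intro v
    have hQv : Q (ext v.1) := v.2
    have hfn : ext v.1 n = i := hQi _ hQv
    obtain ⟨h1, h2, h3⟩ := ht n (ext v.1)
    rw [hfn] at h1 h2 h3
    by_cases hj1 : j = i + 1
    · subst hj1
      rw [show Tq q i (i+1) = 1 / (q ^ i + 1) from if_pos rfl]
      exact h1
    · by_cases hj2 : j = i
      · subst hj2
        rw [show Tq q j j = q ^ j / (q ^ j + 1) by simp [Tq]]
        exact h2
      · rw [show Tq q i j = 0 by simp [Tq, hj1, hj2]]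
        simp only [ENNReal.ofReal_zero, zero_mul]
        exact h3 j hj2 hj1
  have hBm : MeasurableSet B := hm (n+1) (measurableSet_singleton j)
  calc P {ω | Q (fun k => X k ω) ∧ X (n + 1) ω = j}
      = P (⋃ v : ι, (C v ∩ B)) := by rw [hsplit]
    _ = ∑' v : ι, P (C v ∩ B) := by
        refine measure_iUnion ?_ (fun v => (hCm v).inter hBm)
        exact fun v w hvw => (hCdisj hvw).mono Set.inter_subset_left Set.inter_subset_left
    _ = ∑' v : ι, ENNReal.ofReal (Tq q i j) * P (C v) := tsum_congr hper
    _ = ENNReal.ofReal (Tq q i j) * ∑' v : ι, P (C v) := ENNReal.tsum_mul_left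
    _ = ENNReal.ofReal (Tq q i j) * P (⋃ v : ι, C v) := by rw [measure_iUnion hCdisj hCm]
    _ = ENNReal.ofReal (Tq q i j) * P {ω | Q (fun k => X k ω)} := by rw [hA]


lemma state_step (hX : IsQChain P X q) (n i j : ℕ) :
    P {ω | X n ω = i ∧ X (n + 1) ω = j}
      = ENNReal.ofReal (Tq q i j) * P {ω | X n ω = i} := by
  have h := key hX n i j (fun f => f n = i)
    (fun f g h hf => by show g n = i; rw [← h n le_rfl]; exact hf) (fun f hf => hf)
  simpa using h

lemma stuck_le [IsProbabilityMeasure P] (hX : IsQChain P X q) (t i : ℕ) (m : ℕ) :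
    P {ω | ∀ s, t ≤ s → s ≤ t + m → X s ω = i}
      ≤ ENNReal.ofReal (q ^ i / (q ^ i + 1)) ^ m := by
  induction m with
  | zero => simpa using prob_le_one
  | succ m ih =>
    have hkey := key hX (t + m) i i (fun f => ∀ s, t ≤ s → s ≤ t + m → f s = i)
      (fun f g h hf s hs1 hs2 => by rw [← h s (by omega)]; exact hf s hs1 hs2)
      (fun f hf => hf (t + m) (by omega) le_rfl)
    have hset : {ω | ∀ s, t ≤ s → s ≤ t + (m + 1) → X s ω = i}
        = {ω | (fun f => ∀ s, t ≤ s → s ≤ t + m → f s = i) (fun k => X k ω)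
            ∧ X (t + m + 1) ω = i} := by
      ext ω
      simp only [Set.mem_setOf_eq]
      constructor
      · intro h
        exact ⟨fun s hs1 hs2 => h s hs1 (by omega), h (t + m + 1) (by omega) (by omega)⟩
      · rintro ⟨h1, h2⟩ s hs1 hs2
        rcases Nat.lt_or_ge s (t + m + 1) with h | h
        · exact h1 s hs1 (by omega)
        · have : s = t + m + 1 := by omega
          rw [this]; exact h2
    rw [hset, hkey]
    rw [show Tq q i i = q ^ i / (q ^ i + 1) by simp [Tq]]
    rw [pow_succ']
    exact mul_le_mul_right ih _

lemma ae_good (hX : IsQChain P X q) :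
    ∀ᵐ ω ∂P, ∀ n, X (n + 1) ω = X n ω ∨ X (n + 1) ω = X n ω + 1 := by
  rw [ae_iff]
  have hnull : P (⋃ (n : ℕ), ⋃ (i : ℕ), ⋃ (j : ℕ),
      {ω | X n ω = i ∧ X (n + 1) ω = j ∧ j ≠ i + 1 ∧ j ≠ i}) = 0 := by
    refine measure_iUnion_null fun n => measure_iUnion_null fun i =>
      measure_iUnion_null fun j => ?_
    by_cases hj1 : j = i + 1
    · refine measure_mono_null ?_ (measure_empty (μ := P))
      intro ω hω; exact absurd hj1 hω.2.2.1
    by_cases hj2 : j = i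
    · refine measure_mono_null ?_ (measure_empty (μ := P))
      intro ω hω; exact absurd hj2 hω.2.2.2
    have : {ω | X n ω = i ∧ X (n + 1) ω = j ∧ j ≠ i + 1 ∧ j ≠ i}
        = {ω | X n ω = i ∧ X (n + 1) ω = j} := by
      ext ω; simp only [Set.mem_setOf_eq]; tauto
    rw [this, state_step hX n i j, show Tq q i j = 0 by simp [Tq, hj1, hj2]]
    simp
  refine measure_mono_null (fun ω hω => ?_) hnull
  simp only [Set.mem_setOf_eq] at hω
  push_neg at hω
  obtain ⟨n, h1, h2⟩ := hω
  refine Set.mem_iUnion.2 ⟨n, Set.mem_iUnion.2 ⟨X n ω, Set.mem_iUnion.2 ⟨X (n + 1) ω, ?_⟩⟩⟩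
  exact ⟨rfl, rfl, fun h => h2 (by omega), fun h => h1 (by omega)⟩

lemma ae_nostuck [IsProbabilityMeasure P] (hX : IsQChain P X q) (hq : 0 < q) :
    ∀ᵐ ω ∂P, ∀ t i, ∃ s, t ≤ s ∧ X s ω ≠ i := by
  rw [ae_iff]
  have hnull : P (⋃ (t : ℕ), ⋃ (i : ℕ), {ω | ∀ s, t ≤ s → X s ω = i}) = 0 := by
    refine measure_iUnion_null fun t => measure_iUnion_null fun i => ?_
    have hle : ∀ m, P {ω | ∀ s, t ≤ s → X s ω = i}
        ≤ ENNReal.ofReal (q ^ i / (q ^ i + 1)) ^ m := by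
      intro m
      refine le_trans (measure_mono ?_) (stuck_le hX t i m)
      intro ω hω s hs1 _
      exact hω s hs1
    have hlt : ENNReal.ofReal (q ^ i / (q ^ i + 1)) < 1 := by
      rw [ENNReal.ofReal_lt_one]
      have h1 : (0:ℝ) < q ^ i + 1 := by positivity
      rw [div_lt_one h1]; linarith
    have htend := ENNReal.tendsto_pow_atTop_nhds_zero_of_lt_one hlt
    have := ge_of_tendsto' htend hle
    exact le_antisymm this zero_le
  refine measure_mono_null (fun ω hω => ?_) hnull
  simp only [Set.mem_setOf_eq] at hω
  push_neg at hω
  obtain ⟨t, i, h⟩ := hω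
  exact Set.mem_iUnion.2 ⟨t, Set.mem_iUnion.2 ⟨i, fun s hs => h s hs⟩⟩

lemma visits_bound [IsProbabilityMeasure P] (hX : IsQChain P X q) (hq : 0 < q) (i : ℕ) :
    ∑' n, P {ω | X n ω = i ∧ X (n + 1) ω = i} ≤ 2 * ENNReal.ofReal (q ^ i) := by
  classical
  have hm := hX.1
  have hTqii : Tq q i i = q ^ i / (q ^ i + 1) := by simp [Tq]
  set α := ENNReal.ofReal (q ^ i / (q ^ i + 1)) with hα
  set a : ℕ → ENNReal := fun n => P {ω | X n ω = i} with ha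
  set b : ℕ → ENNReal := fun n => P {ω | X n ω ≠ i ∧ X (n + 1) ω = i} with hb
  have hstep : ∀ n, a (n + 1) = α * a n + b n := by
    intro n
    have hsplit : {ω | X (n + 1) ω = i}
        = {ω | X n ω = i ∧ X (n + 1) ω = i} ∪ {ω | X n ω ≠ i ∧ X (n + 1) ω = i} := by
      ext ω
      simp only [Set.mem_setOf_eq, Set.mem_union]
      tauto
    have hmeas2 : MeasurableSet {ω | X n ω ≠ i ∧ X (n + 1) ω = i} := by
      have he : {ω | X n ω ≠ i ∧ X (n + 1) ω = i}
          = (X n ⁻¹' {i})ᶜ ∩ (X (n + 1) ⁻¹' {i}) := by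
        ext ω; simp [Set.mem_preimage]
      rw [he]
      exact ((hm n (measurableSet_singleton i)).compl).inter
        (hm (n + 1) (measurableSet_singleton i))
    have hdisj : Disjoint {ω | X n ω = i ∧ X (n + 1) ω = i}
        {ω | X n ω ≠ i ∧ X (n + 1) ω = i} := by
      rw [Set.disjoint_left]
      rintro ω ⟨h1, -⟩ ⟨h2, -⟩
      exact h2 h1
    calc a (n + 1) = P {ω | X (n + 1) ω = i} := rfl
      _ = P ({ω | X n ω = i ∧ X (n + 1) ω = i} ∪ {ω | X n ω ≠ i ∧ X (n + 1) ω = i}) := by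
          rw [← hsplit]
      _ = P {ω | X n ω = i ∧ X (n + 1) ω = i} + P {ω | X n ω ≠ i ∧ X (n + 1) ω = i} :=
          measure_union hdisj hmeas2
      _ = α * a n + b n := by rw [state_step hX n i i, hTqii]
  set G : Set Ω := {ω | ∀ k, X (k + 1) ω = X k ω ∨ X (k + 1) ω = X k ω + 1} with hG
  have hGc : P Gᶜ = 0 := by
    rw [hG, Set.compl_setOf]
    exact ae_iff.mp (ae_good hX)
  have hGm : MeasurableSet G := by
    have he : G = ⋂ k, ⋃ m, ((X k) ⁻¹' {m} ∩ ((X (k + 1)) ⁻¹' {m} ∪ (X (k + 1)) ⁻¹' {m + 1})) := by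
      ext ω
      simp only [hG, Set.mem_setOf_eq, Set.mem_iInter, Set.mem_iUnion, Set.mem_inter_iff,
        Set.mem_union, Set.mem_preimage, Set.mem_singleton_iff]
      constructor
      · intro h k
        refine ⟨X k ω, rfl, ?_⟩
        rcases h k with h' | h'
        · left; omega
        · right; omega
      · intro h k
        obtain ⟨m, hm1, hm2⟩ := h k
        rcases hm2 with h' | h'
        · left; omega
        · right; omega
    rw [he]
    exact MeasurableSet.iInter fun k => MeasurableSet.iUnion fun m =>
      (hm k (measurableSet_singleton m)).inter
        ((hm (k + 1) (measurableSet_singleton m)).union (hm (k + 1) (measurableSet_singleton (m + 1))))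
  have hmono : ∀ ω, ω ∈ G → ∀ k l, k ≤ l → X k ω ≤ X l ω := by
    intro ω hω k l hkl
    induction hkl with
    | refl => exact le_rfl
    | @step m hm' ih =>
      have h' := hω m
      show X k ω ≤ X (m + 1) ω
      omega
  have hbsum : ∀ N, ∑ n ∈ Finset.range N, b n ≤ 1 := by
    intro N
    set D : ℕ → Set Ω := fun n => {ω | X n ω ≠ i ∧ X (n + 1) ω = i} ∩ G with hD
    have key2 : ∀ n1 n2, n1 < n2 → ∀ ω, ω ∈ D n1 → ω ∈ D n2 → False := by
      rintro n1 n2 h ω ⟨⟨ha1, ha2⟩, hg⟩ ⟨⟨hb1, hb2⟩, -⟩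
      have h1 : X (n1 + 1) ω ≤ X n2 ω := hmono ω hg (n1 + 1) n2 (by omega)
      have h2 : X n2 ω ≤ X (n2 + 1) ω := hmono ω hg n2 (n2 + 1) (by omega)
      omega
    have hdisjD : (↑(Finset.range N) : Set ℕ).PairwiseDisjoint D := by
      intro n1 _ n2 _ hne
      rw [Function.onFun, Set.disjoint_left]
      intro ω h1 h2
      rcases Nat.lt_or_ge n1 n2 with h | h
      · exact key2 n1 n2 h ω h1 h2
      · exact key2 n2 n1 (by omega) ω h2 h1
    have hmeasD : ∀ n ∈ Finset.range N, MeasurableSet (D n) := by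
      intro n _
      refine MeasurableSet.inter ?_ hGm
      have he : {ω | X n ω ≠ i ∧ X (n + 1) ω = i}
          = (X n ⁻¹' {i})ᶜ ∩ (X (n + 1) ⁻¹' {i}) := by
        ext ω; simp [Set.mem_preimage]
      rw [he]
      exact ((hm n (measurableSet_singleton i)).compl).inter
        (hm (n + 1) (measurableSet_singleton i))
    have hble : ∀ n, b n ≤ P (D n) := by
      intro n
      calc b n = P {ω | X n ω ≠ i ∧ X (n + 1) ω = i} := rfl
        _ ≤ P ((D n) ∪ Gᶜ) := by
            refine measure_mono fun ω hω => ?_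
            by_cases hg : ω ∈ G
            · exact Or.inl ⟨hω, hg⟩
            · exact Or.inr hg
        _ ≤ P (D n) + P Gᶜ := measure_union_le _ _
        _ = P (D n) := by rw [hGc, add_zero]
    calc ∑ n ∈ Finset.range N, b n ≤ ∑ n ∈ Finset.range N, P (D n) :=
          Finset.sum_le_sum fun n _ => hble n
      _ = P (⋃ n ∈ Finset.range N, D n) := (measure_biUnion_finset hdisjD hmeasD).symm
      _ ≤ 1 := prob_le_one
  have hF : ∀ N, ENNReal.ofReal (1 / (q ^ i + 1)) * ∑ n ∈ Finset.range N, a n ≤ 2 := by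
    intro N
    have hFfin : ∑ n ∈ Finset.range N, a n ≠ ⊤ := by
      refine ne_top_of_le_ne_top ?_ (Finset.sum_le_sum fun n _ => prob_le_one (μ := P))
      simp
    have hrec : ∑ n ∈ Finset.range N, a n ≤ 2 + α * ∑ n ∈ Finset.range N, a n := by
      cases N with
      | zero => simp
      | succ N =>
        conv_lhs => rw [Finset.sum_range_succ']
        have hsum1 : ∑ n ∈ Finset.range N, a (n + 1)
            = α * ∑ n ∈ Finset.range N, a n + ∑ n ∈ Finset.range N, b n := by
          rw [Finset.mul_sum, ← Finset.sum_add_distrib]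
          exact Finset.sum_congr rfl fun n _ => hstep n
        calc ∑ n ∈ Finset.range N, a (n + 1) + a 0
            = α * ∑ n ∈ Finset.range N, a n + ∑ n ∈ Finset.range N, b n + a 0 := by
              rw [hsum1]
          _ ≤ α * ∑ n ∈ Finset.range (N + 1), a n + 1 + 1 :=
              add_le_add (add_le_add (mul_le_mul_right
                (Finset.sum_le_sum_of_subset (Finset.range_subset_range.2 (Nat.le_succ N))) α)
                (hbsum N)) prob_le_one
          _ = 2 + α * ∑ n ∈ Finset.range (N + 1), a n := by ring
    have hβα : ENNReal.ofReal (1 / (q ^ i + 1)) = 1 - α := by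
      rw [hα, ← ENNReal.ofReal_one, ← ENNReal.ofReal_sub 1 (by positivity)]
      congr 1
      have hne : q ^ i + 1 ≠ 0 := by positivity
      field_simp
      ring
    rw [hβα, ENNReal.sub_mul (fun _ _ => hFfin), one_mul, tsub_le_iff_right]
    exact hrec
  have htsum : ENNReal.ofReal (1 / (q ^ i + 1)) * ∑' n, a n ≤ 2 := by
    rw [ENNReal.tsum_eq_iSup_nat, ENNReal.mul_iSup]
    exact iSup_le hF
  calc ∑' n, P {ω | X n ω = i ∧ X (n + 1) ω = i}
      = ∑' n, α * a n := tsum_congr fun n => by rw [state_step hX n i i, hTqii]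
    _ = α * ∑' n, a n := ENNReal.tsum_mul_left
    _ = ENNReal.ofReal (q ^ i) * (ENNReal.ofReal (1 / (q ^ i + 1)) * ∑' n, a n) := by
        rw [← mul_assoc, ← ENNReal.ofReal_mul (by positivity), hα, mul_one_div]
    _ ≤ ENNReal.ofReal (q ^ i) * 2 := mul_le_mul_right htsum _
    _ = 2 * ENNReal.ofReal (q ^ i) := mul_comm _ _

lemma ae_bc [IsProbabilityMeasure P] (hX : IsQChain P X q) (hq : 0 < q) (hq1 : q < 1) :
    ∀ᵐ ω ∂P, ∀ᶠ i in atTop, ¬ ∃ n, X n ω = i ∧ X (n + 1) ω = i := by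
  set B : ℕ → Set Ω := fun i => ⋃ n, {ω | X n ω = i ∧ X (n + 1) ω = i} with hB
  have hBle : ∀ i, P (B i) ≤ 2 * ENNReal.ofReal (q ^ i) :=
    fun i => le_trans (measure_iUnion_le _) (visits_bound hX hq i)
  have hsum : ∑' i, P (B i) ≠ ⊤ := by
    refine ne_top_of_le_ne_top ?_ (ENNReal.tsum_le_tsum hBle)
    have he : ∀ i : ℕ, (2 : ENNReal) * ENNReal.ofReal (q ^ i)
        = 2 * (ENNReal.ofReal q) ^ i := by
      intro i; rw [ENNReal.ofReal_pow hq.le]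
    rw [tsum_congr he, ENNReal.tsum_mul_left, ENNReal.tsum_geometric]
    have hlt : ENNReal.ofReal q < 1 := by rw [ENNReal.ofReal_lt_one]; exact hq1
    refine ENNReal.mul_ne_top (by simp) ?_
    rw [ENNReal.inv_ne_top]
    intro h0
    rw [tsub_eq_zero_iff_le] at h0
    exact absurd (lt_of_lt_of_le hlt h0) (lt_irrefl _)
  have h := ae_eventually_notMem hsum
  filter_upwards [h] with ω hω
  refine hω.mono fun i hi hex => hi ?_
  obtain ⟨n, h1, h2⟩ := hex
  exact Set.mem_iUnion.2 ⟨n, h1, h2⟩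

end QAux

/-- Linear lower bound in the `0 < q < 1` regime. -/
theorem stmt2 {Ω : Type*} [MeasurableSpace Ω] (P : Measure Ω) [IsProbabilityMeasure P]
    (q : ℝ) (X : ℕ → Ω → ℕ) (hq : 0 < q) (hX : IsQChain P X q) (hq1 : q < 1) :
    ∀ᵐ ω ∂P, ∃ D : ℝ, ∃ N : ℕ, ∀ n : ℕ, N ≤ n →
      (n : ℝ) - D ≤ (X n ω : ℝ) := by
  have hgood := QAux.ae_good hX
  have hns := QAux.ae_nostuck hX hq
  have hbc := QAux.ae_bc hX hq hq1
  filter_upwards [hgood, hns, hbc] with ω hg hn hb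
  obtain ⟨I, hI⟩ := eventually_atTop.1 hb
  have hmono : ∀ k l, k ≤ l → X k ω ≤ X l ω := by
    intro k l hkl
    induction hkl with
    | refl => exact le_rfl
    | @step m hm' ih =>
      have := hg m
      show X k ω ≤ X (m + 1) ω
      omega
  have hub : ∀ J, ∃ N, J ≤ X N ω := by
    intro J
    induction J with
    | zero => exact ⟨0, Nat.zero_le _⟩
    | succ J ihJ =>
      obtain ⟨N, hN⟩ := ihJ
      obtain ⟨s, hs, hne⟩ := hn N (X N ω)
      have := hmono N s hs
      exact ⟨s, by omega⟩
  obtain ⟨N, hN⟩ := hub I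
  have hstep2 : ∀ m, I + m ≤ X (N + m) ω := by
    intro m
    induction m with
    | zero => simpa using hN
    | succ m ih =>
      have hIi : I ≤ X (N + m) ω := by omega
      have hnb := hI (X (N + m) ω) hIi
      have hne : X (N + m + 1) ω ≠ X (N + m) ω := fun h => hnb ⟨N + m, rfl, h⟩
      have := hg (N + m)
      show I + (m + 1) ≤ X (N + (m + 1)) ω
      have heq : N + (m + 1) = (N + m) + 1 := by omega
      rw [heq]
      omega
  refine ⟨(N : ℝ), N, fun n hn' => ?_⟩
  have h1 : I + (n - N) ≤ X n ω := by
    have h2 := hstep2 (n - N)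
    rwa [show N + (n - N) = n by omega] at h2
  have h3 : ((n - N : ℕ) : ℝ) ≤ (X n ω : ℝ) := by
    exact_mod_cast (by omega : n - N ≤ X n ω)
  rw [Nat.cast_sub hn'] at h3
  exact h3
end

section
/- (Distribution of the chain.) For every n ≥ 0 and every k ∈ {0,1,2,...}, P(X_n = k) = (∏_{j=0}^{k-1} (1 + q^j))^{-1} · Σ ∏_{i=0}^{k} (q^i/(q^i + 1))^{y_i}, where the sum ranges over all tuples (y_0, y_1, ..., y_k) of nonnegative integers with y_0 + y_1 + ... + y_k = n − k; in particular P(X_n = k) = 0 when k > n. -/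
open MeasureTheory Filter Topology

noncomputable def qrr (q : ℝ) (i : ℕ) : ℝ := q ^ i / (q ^ i + 1)
noncomputable def qss (q : ℝ) (i : ℕ) : ℝ := 1 / (q ^ i + 1)
noncomputable def qcc (q : ℝ) (k : ℕ) : ℝ := (∏ j ∈ Finset.range k, (1 + q ^ j))⁻¹
noncomputable def qS (q : ℝ) (k m : ℕ) : ℝ :=
  ∑ y ∈ Finset.Nat.antidiagonalTuple (k + 1) m, ∏ i : Fin (k + 1), qrr q i ^ y i
noncomputable def qT (q : ℝ) (n k : ℕ) : ℝ := if k ≤ n then qS q k (n - k) else 0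

section Comb

variable {q : ℝ}

lemma qpos (hq : 0 < q) (i : ℕ) : 0 < q ^ i + 1 := by positivity

lemma qrr_nonneg (hq : 0 < q) (i : ℕ) : 0 ≤ qrr q i :=
  div_nonneg (by positivity) (qpos hq i).le

lemma qss_nonneg (hq : 0 < q) (i : ℕ) : 0 ≤ qss q i :=
  div_nonneg one_pos.le (qpos hq i).le

lemma qcc_nonneg (hq : 0 < q) (k : ℕ) : 0 ≤ qcc q k := by
  have : (0:ℝ) < ∏ j ∈ Finset.range k, (1 + q ^ j) :=
    Finset.prod_pos fun j _ => by positivity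
  exact inv_nonneg.2 this.le

lemma qS_nonneg (hq : 0 < q) (k m : ℕ) : 0 ≤ qS q k m :=
  Finset.sum_nonneg fun y _ => Finset.prod_nonneg fun i _ => pow_nonneg (qrr_nonneg hq _) _

lemma qT_nonneg (hq : 0 < q) (n k : ℕ) : 0 ≤ qT q n k := by
  unfold qT; split
  · exact qS_nonneg hq _ _
  · rfl

lemma sum_aT_snoc {k : ℕ} (g : Fin (k + 1) → ℝ) (M : ℕ) :
    ∑ y ∈ Finset.Nat.antidiagonalTuple (k + 1) M, ∏ i, g i ^ y i
      = ∑ p ∈ Finset.HasAntidiagonal.antidiagonal M,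
          (∑ y ∈ Finset.Nat.antidiagonalTuple k p.1, ∏ i : Fin k, g i.castSucc ^ y i)
            * g (Fin.last k) ^ p.2 := by
  simp_rw [Finset.sum_mul]
  rw [Finset.sum_sigma']
  refine (Finset.sum_nbij' (i := fun x : Σ _ : ℕ × ℕ, Fin k → ℕ => Fin.snoc x.2 x.1.2)
    (j := fun y => ⟨(∑ i : Fin k, y i.castSucc, y (Fin.last k)), fun i => y i.castSucc⟩)
    ?_ ?_ ?_ ?_ ?_).symm
  · rintro ⟨⟨a, b⟩, y⟩ hx
    simp only [Finset.mem_sigma, Finset.HasAntidiagonal.mem_antidiagonal,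
      Finset.Nat.mem_antidiagonalTuple] at hx ⊢
    rw [Fin.sum_univ_castSucc]
    simp [hx.2, hx.1]
  · intro y hy
    simp only [Finset.Nat.mem_antidiagonalTuple] at hy
    simp only [Finset.mem_sigma, Finset.HasAntidiagonal.mem_antidiagonal,
      Finset.Nat.mem_antidiagonalTuple]
    refine ⟨?_, trivial⟩
    rw [← hy, Fin.sum_univ_castSucc]
  · rintro ⟨⟨a, b⟩, y⟩ hx
    simp only [Finset.mem_sigma, Finset.HasAntidiagonal.mem_antidiagonal,
      Finset.Nat.mem_antidiagonalTuple] at hx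
    have h2 : (fun i : Fin k => (Fin.snoc y b : Fin (k + 1) → ℕ) (Fin.castSucc i)) = y := by
      funext i; simp
    simp [h2, Fin.snoc_last, hx.2]
  · intro y hy
    exact Fin.snoc_init_self y
  · rintro ⟨⟨a, b⟩, y⟩ hx
    rw [Fin.prod_univ_castSucc]
    simp [Fin.snoc_castSucc, Fin.snoc_last]

lemma qS_zero_left (m : ℕ) : qS q 0 m = qrr q 0 ^ m := by
  unfold qS
  rw [Finset.Nat.antidiagonalTuple_one, Finset.sum_singleton, Fin.prod_univ_one]
  simp

lemma qS_zero_right (k : ℕ) : qS q k 0 = 1 := by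
  unfold qS
  rw [Finset.Nat.antidiagonalTuple_zero_right, Finset.sum_singleton]
  simp

lemma qS_succ (k m : ℕ) :
    qS q (k + 1) (m + 1) = qrr q (k + 1) * qS q (k + 1) m + qS q k (m + 1) := by
  have key : ∀ M : ℕ, qS q (k + 1) M
      = ∑ p ∈ Finset.HasAntidiagonal.antidiagonal M, qS q k p.1 * qrr q (k + 1) ^ p.2 := by
    intro M
    unfold qS
    rw [sum_aT_snoc (fun i : Fin (k + 2) => qrr q i) M]
    simp only [Fin.coe_castSucc, Fin.val_last]
  rw [key (m + 1), key m, Finset.Nat.antidiagonal_succ', Finset.sum_cons, Finset.sum_map]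
  simp only [Function.Embedding.coe_prodMap, Function.Embedding.coeFn_mk,
    Function.Embedding.refl_apply, Prod.map_fst, Prod.map_snd]
  rw [pow_zero, mul_one, add_comm]
  congr 1
  rw [Finset.mul_sum]
  exact Finset.sum_congr rfl fun x _ => by rw [pow_succ]; ring

lemma qT_succ_succ (n k : ℕ) :
    qT q (n + 1) (k + 1) = qT q n k + qrr q (k + 1) * qT q n (k + 1) := by
  unfold qT
  rcases lt_trichotomy k n with h | rfl | h
  · rw [if_pos (by omega), if_pos (by omega), if_pos (by omega)]
    have h1 : n + 1 - (k + 1) = (n - (k + 1)) + 1 := by omega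
    have h2 : n - (k + 1) + 1 = n - k := by omega
    rw [h1, qS_succ, h2, add_comm]
  · rw [if_pos (by omega), if_pos (by omega), if_neg (by omega)]
    simp [qS_zero_right]
  · rw [if_neg (by omega), if_neg (by omega), if_neg (by omega)]
    ring

lemma qT_zero (n : ℕ) : qT q n 0 = qrr q 0 ^ n := by
  unfold qT
  rw [if_pos (Nat.zero_le n), qS_zero_left, Nat.sub_zero]

lemma qss_mul_qcc (k : ℕ) : qss q k * qcc q k = qcc q (k + 1) := by
  unfold qss qcc
  rw [Finset.prod_range_succ, mul_inv]
  rw [one_div, add_comm (1:ℝ) (q ^ k)]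
  ring

end Comb

section Prob

noncomputable def qTmat (q : ℝ) (i k : ℕ) : ENNReal :=
  if k = i + 1 then ENNReal.ofReal (qss q i)
  else if k = i then ENNReal.ofReal (qrr q i) else 0

variable {Ω : Type*} [MeasurableSpace Ω] {P : Measure Ω} [IsProbabilityMeasure P]
  {X : ℕ → Ω → ℕ} {q : ℝ}

lemma meas_cyl (hm : ∀ n, Measurable (X n)) (n : ℕ) (f : ℕ → ℕ) :
    MeasurableSet {ω | ∀ k ≤ n, X k ω = f k} := by
  have : {ω | ∀ k ≤ n, X k ω = f k} = ⋂ k ∈ Finset.range (n + 1), X k ⁻¹' {f k} := by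
    ext ω; simp [Nat.lt_succ_iff]
  rw [this]
  exact (Finset.range (n + 1)).measurableSet_biInter
    fun k _ => (hm k) (measurableSet_singleton _)

lemma step_eq (hq : 0 < q) (hX : IsQChain P X q) (n i k : ℕ) :
    P {ω | X n ω = i ∧ X (n + 1) ω = k}
      = qTmat q i k * P {ω | X n ω = i} := by
  obtain ⟨hm, -, hstep⟩ := hX
  let G := {g : Fin (n + 1) → ℕ // g (Fin.last n) = i}
  let ext : G → ℕ → ℕ := fun g j => g.1 ⟨min j n, by omega⟩
  let E : G → Set Ω := fun g => {ω | ∀ k ≤ n, X k ω = ext g k}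
  have hext_le : ∀ (g : G) (j : Fin (n + 1)), ext g j.1 = g.1 j := by
    intro g j
    have hv : min j.1 n = j.1 := by have := j.isLt; omega
    exact congrArg g.1 (Fin.ext hv)
  have hextn : ∀ g : G, ext g n = i := by
    intro g
    have h1 := hext_le g (Fin.last n)
    rw [g.2] at h1
    exact h1
  have hEmeas : ∀ g : G, MeasurableSet (E g) := fun g => meas_cyl hm n (ext g)
  have hdisj : Pairwise (Function.onFun Disjoint E) := by
    intro g1 g2 hne
    rw [Function.onFun, Set.disjoint_left]
    intro ω h1 h2
    apply hne
    apply Subtype.ext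
    funext j
    have e1 := h1 j.1 (by omega : j.1 ≤ n)
    have e2 := h2 j.1 (by omega : j.1 ≤ n)
    rw [hext_le g1 j] at e1
    rw [hext_le g2 j] at e2
    rw [← e1, ← e2]
  have hcover1 : {ω | X n ω = i} = ⋃ g : G, E g := by
    ext ω
    simp only [Set.mem_iUnion, Set.mem_setOf_eq]
    constructor
    · intro h
      refine ⟨⟨fun j => X j.1 ω, by simpa using h⟩, ?_⟩
      intro k hk
      show X k ω = (fun j : Fin (n + 1) => X j.1 ω) ⟨min k n, _⟩
      simp [Nat.min_eq_left hk]
    · rintro ⟨g, hg⟩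
      have := hg n le_rfl
      rw [hextn] at this
      exact this
  have hcover2 : {ω | X n ω = i ∧ X (n + 1) ω = k}
      = ⋃ g : G, (E g ∩ {ω | X (n + 1) ω = k}) := by
    ext ω
    simp only [Set.mem_iUnion, Set.mem_setOf_eq, Set.mem_inter_iff]
    constructor
    · rintro ⟨h, h2⟩
      refine ⟨⟨fun j => X j.1 ω, by simpa using h⟩, ?_, h2⟩
      intro k hk
      show X k ω = (fun j : Fin (n + 1) => X j.1 ω) ⟨min k n, _⟩
      simp [Nat.min_eq_left hk]
    · rintro ⟨g, hg, h2⟩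
      have := hg n le_rfl
      rw [hextn] at this
      exact ⟨this, h2⟩
  have hterm : ∀ g : G, P (E g ∩ {ω | X (n + 1) ω = k}) = qTmat q i k * P (E g) := by
    intro g
    have hs := hstep n (ext g)
    have hEg : {ω | ∀ k ≤ n, X k ω = ext g k} = E g := rfl
    have h2 : ∀ j : ℕ, E g ∩ {ω | X (n + 1) ω = j}
        = {ω | (∀ k ≤ n, X k ω = ext g k) ∧ X (n + 1) ω = j} := fun j => rfl
    by_cases hk1 : k = i + 1
    · have h1 := hs.1
      rw [hextn g, hEg] at h1
      subst hk1
      unfold qTmat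
      rw [if_pos rfl, h2, h1]
      rfl
    · by_cases hk2 : k = i
      · have h1 := hs.2.1
        rw [hextn g, hEg] at h1
        subst hk2
        unfold qTmat
        rw [if_neg (by omega), if_pos rfl, h2, h1]
        rfl
      · have h1 := hs.2.2 k (by rw [hextn g]; exact hk2) (by rw [hextn g]; exact hk1)
        unfold qTmat
        rw [if_neg hk1, if_neg hk2, zero_mul, h2]
        exact h1
  have hdisj2 : Pairwise (Function.onFun Disjoint
      fun g : G => E g ∩ {ω | X (n + 1) ω = k}) := fun g1 g2 hne =>
    ((hdisj hne).mono Set.inter_subset_left Set.inter_subset_left)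
  have hms2 : ∀ g : G, MeasurableSet (E g ∩ {ω | X (n + 1) ω = k}) := fun g =>
    (hEmeas g).inter ((hm (n + 1)) (measurableSet_singleton k))
  rw [hcover2, measure_iUnion hdisj2 hms2]
  calc ∑' g : G, P (E g ∩ {ω | X (n + 1) ω = k})
      = ∑' g : G, qTmat q i k * P (E g) := tsum_congr hterm
    _ = qTmat q i k * ∑' g : G, P (E g) := ENNReal.tsum_mul_left
    _ = qTmat q i k * P {ω | X n ω = i} := by
        rw [hcover1, measure_iUnion hdisj hEmeas]

lemma rec_zero (hq : 0 < q) (hX : IsQChain P X q) (n : ℕ) :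
    P {ω | X (n + 1) ω = 0} = ENNReal.ofReal (qrr q 0) * P {ω | X n ω = 0} := by
  have hm := hX.1
  have hpart : {ω | X (n + 1) ω = 0} = ⋃ i : ℕ, {ω | X n ω = i ∧ X (n + 1) ω = 0} := by
    ext ω
    simp only [Set.mem_iUnion, Set.mem_setOf_eq]
    exact ⟨fun h => ⟨X n ω, rfl, h⟩, fun ⟨i, _, h⟩ => h⟩
  have hmeas : ∀ i : ℕ, MeasurableSet {ω | X n ω = i ∧ X (n + 1) ω = 0} := by
    intro i
    have : {ω | X n ω = i ∧ X (n + 1) ω = 0}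
        = (X n ⁻¹' {i}) ∩ (X (n + 1) ⁻¹' {0}) := rfl
    rw [this]
    exact ((hm n) (measurableSet_singleton _)).inter ((hm (n+1)) (measurableSet_singleton _))
  have hdisj : Pairwise (Function.onFun Disjoint
      fun i : ℕ => {ω | X n ω = i ∧ X (n + 1) ω = 0}) := by
    intro i1 i2 hne
    rw [Function.onFun, Set.disjoint_left]
    rintro ω ⟨h1, -⟩ ⟨h2, -⟩
    exact hne (h1 ▸ h2 ▸ rfl)
  rw [hpart, measure_iUnion hdisj hmeas]
  rw [tsum_eq_single 0 ?_]
  · rw [step_eq hq hX n 0 0]; unfold qTmat; rw [if_neg (by omega), if_pos rfl]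
  · intro i hi
    rw [step_eq hq hX n i 0]; unfold qTmat; rw [if_neg (by omega), if_neg (Ne.symm hi), zero_mul]

lemma rec_succ (hq : 0 < q) (hX : IsQChain P X q) (n k : ℕ) :
    P {ω | X (n + 1) ω = k + 1}
      = ENNReal.ofReal (qss q k) * P {ω | X n ω = k}
        + ENNReal.ofReal (qrr q (k + 1)) * P {ω | X n ω = k + 1} := by
  have hm := hX.1
  have hpart : {ω | X (n + 1) ω = k + 1}
      = ⋃ i : ℕ, {ω | X n ω = i ∧ X (n + 1) ω = k + 1} := by
    ext ω
    simp only [Set.mem_iUnion, Set.mem_setOf_eq]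
    exact ⟨fun h => ⟨X n ω, rfl, h⟩, fun ⟨i, _, h⟩ => h⟩
  have hmeas : ∀ i : ℕ, MeasurableSet {ω | X n ω = i ∧ X (n + 1) ω = k + 1} := by
    intro i
    have : {ω | X n ω = i ∧ X (n + 1) ω = k + 1}
        = (X n ⁻¹' {i}) ∩ (X (n + 1) ⁻¹' {k + 1}) := rfl
    rw [this]
    exact ((hm n) (measurableSet_singleton _)).inter ((hm (n+1)) (measurableSet_singleton _))
  have hdisj : Pairwise (Function.onFun Disjoint
      fun i : ℕ => {ω | X n ω = i ∧ X (n + 1) ω = k + 1}) := by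
    intro i1 i2 hne
    rw [Function.onFun, Set.disjoint_left]
    rintro ω ⟨h1, -⟩ ⟨h2, -⟩
    exact hne (h1 ▸ h2 ▸ rfl)
  rw [hpart, measure_iUnion hdisj hmeas]
  have hzero : ∀ i ∉ ({k, k + 1} : Finset ℕ),
      P {ω | X n ω = i ∧ X (n + 1) ω = k + 1} = 0 := by
    intro i hi
    simp only [Finset.mem_insert, Finset.mem_singleton] at hi
    push_neg at hi
    rw [step_eq hq hX n i (k + 1)]; unfold qTmat; rw [if_neg (by omega), if_neg (by omega), zero_mul]
  rw [tsum_eq_sum hzero, Finset.sum_insert (by simp), Finset.sum_singleton]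
  rw [step_eq hq hX n k (k + 1), step_eq hq hX n (k + 1) (k + 1)]
  unfold qTmat
  rw [if_pos rfl, if_neg (by omega), if_pos rfl]

lemma base_zero (hX : IsQChain P X q) : P {ω | X 0 ω = 0} = 1 := by
  have h := hX.2.1
  have hms : MeasurableSet {ω | X 0 ω = 0} := (hX.1 0) (measurableSet_singleton 0)
  have h2 : P {ω | X 0 ω = 0}ᶜ = 0 := by
    rw [Set.compl_setOf]
    exact ae_iff.mp h
  exact (prob_compl_eq_zero_iff hms).mp h2

lemma base_succ (hX : IsQChain P X q) (k : ℕ) : P {ω | X 0 ω = k + 1} = 0 := by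
  refine measure_mono_null ?_ (ae_iff.mp hX.2.1)
  intro ω h
  simp only [Set.mem_setOf_eq] at h ⊢
  omega

lemma key_formula (hq : 0 < q) (hX : IsQChain P X q) :
    ∀ n k, P {ω | X n ω = k} = ENNReal.ofReal (qcc q k * qT q n k) := by
  intro n
  induction n with
  | zero =>
    intro k
    cases k with
    | zero =>
      rw [base_zero hX]
      have h1 : qcc q 0 * qT q 0 0 = 1 := by
        simp [qcc, qT, qS_zero_right]
      rw [h1, ENNReal.ofReal_one]
    | succ k =>
      rw [base_succ hX k]
      have h1 : qT q 0 (k + 1) = 0 := by simp [qT]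
      rw [h1, mul_zero, ENNReal.ofReal_zero]
  | succ n ih =>
    intro k
    cases k with
    | zero =>
      rw [rec_zero hq hX n, ih 0, ← ENNReal.ofReal_mul (qrr_nonneg hq 0)]
      congr 1
      rw [qT_zero, qT_zero]
      have h1 : qcc q 0 = 1 := by simp [qcc]
      rw [h1]
      ring
    | succ k =>
      rw [rec_succ hq hX n k, ih k, ih (k + 1),
        ← ENNReal.ofReal_mul (qss_nonneg hq k),
        ← ENNReal.ofReal_mul (qrr_nonneg hq (k + 1)),
        ← ENNReal.ofReal_add
          (mul_nonneg (qss_nonneg hq k) (mul_nonneg (qcc_nonneg hq k) (qT_nonneg hq n k)))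
          (mul_nonneg (qrr_nonneg hq (k + 1))
            (mul_nonneg (qcc_nonneg hq (k + 1)) (qT_nonneg hq n (k + 1))))]
      congr 1
      rw [qT_succ_succ, ← qss_mul_qcc]
      ring

end Prob

/-- Distribution of the chain: probability of `k` successes in `n` steps. -/
theorem stmt3 {Ω : Type*} [MeasurableSpace Ω] (P : Measure Ω) [IsProbabilityMeasure P]
    (q : ℝ) (X : ℕ → Ω → ℕ) (hq : 0 < q) (hX : IsQChain P X q) (n k : ℕ) :
    P {ω | X n ω = k}
        = ENNReal.ofReal ((∏ j ∈ Finset.range k, (1 + q ^ j))⁻¹ *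
            ∑' y : {y : Fin (k + 1) → ℕ // (∑ i, y i) + k = n},
              ∏ i : Fin (k + 1), (q ^ (i : ℕ) / (q ^ (i : ℕ) + 1)) ^ (y.1 i)) ∧
      (n < k → P {ω | X n ω = k} = 0) := by
  have hkey := key_formula hq hX n k
  have htsum : (∑' y : {y : Fin (k + 1) → ℕ // (∑ i, y i) + k = n},
      ∏ i : Fin (k + 1), (q ^ (i : ℕ) / (q ^ (i : ℕ) + 1)) ^ (y.1 i)) = qT q n k := by
    by_cases hkn : k ≤ n
    · unfold qT; rw [if_pos hkn]
      have hiff : ∀ y : Fin (k + 1) → ℕ,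
          (y ∈ Finset.Nat.antidiagonalTuple (k + 1) (n - k)) ↔ ((∑ i, y i) + k = n) := by
        intro y
        rw [Finset.Nat.mem_antidiagonalTuple]
        omega
      calc (∑' y : {y : Fin (k + 1) → ℕ // (∑ i, y i) + k = n},
              ∏ i : Fin (k + 1), (q ^ (i : ℕ) / (q ^ (i : ℕ) + 1)) ^ (y.1 i))
          = ∑' y : {y : Fin (k + 1) → ℕ // y ∈ Finset.Nat.antidiagonalTuple (k + 1) (n - k)},
              ∏ i : Fin (k + 1), (q ^ (i : ℕ) / (q ^ (i : ℕ) + 1)) ^ (y.1 i) :=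
            ((Equiv.subtypeEquivRight hiff).tsum_eq
              (fun y : {y : Fin (k + 1) → ℕ // (∑ i, y i) + k = n} =>
                ∏ i : Fin (k + 1), (q ^ (i : ℕ) / (q ^ (i : ℕ) + 1)) ^ (y.1 i))).symm
        _ = ∑ y ∈ Finset.Nat.antidiagonalTuple (k + 1) (n - k),
              ∏ i : Fin (k + 1), (q ^ (i : ℕ) / (q ^ (i : ℕ) + 1)) ^ (y i) :=
            Finset.tsum_subtype (Finset.Nat.antidiagonalTuple (k + 1) (n - k))
              (fun y => ∏ i : Fin (k + 1), (q ^ (i : ℕ) / (q ^ (i : ℕ) + 1)) ^ (y i))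
        _ = qS q k (n - k) := rfl
    · unfold qT; rw [if_neg hkn]
      have hempty : ∀ y : {y : Fin (k + 1) → ℕ // (∑ i, y i) + k = n}, False :=
        fun y => by have := y.2; omega
      rw [tsum_eq_sum (s := (∅ : Finset _)) (fun b _ => (hempty b).elim), Finset.sum_empty]
  constructor
  · rw [hkey, htsum]
    rfl
  · intro hnk
    rw [hkey]
    have h1 : qT q n k = 0 := by unfold qT; rw [if_neg (by omega)]
    rw [h1, mul_zero, ENNReal.ofReal_zero]
end

section
/- (Expected hitting time.) For every N ∈ {0,1,2,...}, the expected hitting time of state N satisfies E[min{n ≥ 0 : X_n = N}] = Σ_{i=0}^{N-1} (1 + q^i); in particular, if q ≠ 1 this equals N + (q^N − 1)/(q − 1). -/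
open MeasureTheory Filter Topology
open scoped ENNReal

namespace QChainAux

/-! ### Abstract ENNReal recursion analysis -/

section Abstract
variable {q : ℝ} (hq : 0 < q)

noncomputable def rE (q : ℝ) (j : ℕ) : ℝ≥0∞ := ENNReal.ofReal (q ^ j / (q ^ j + 1))
noncomputable def sE (q : ℝ) (j : ℕ) : ℝ≥0∞ := ENNReal.ofReal (1 / (q ^ j + 1))

include hq

lemma hc_pos (j : ℕ) : 0 < q ^ j + 1 := by positivity

lemma r_add_s (j : ℕ) : rE q j + sE q j = 1 := by
  rw [rE, sE, ← ENNReal.ofReal_add (by positivity) (by positivity)]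
  rw [← add_div, div_self (hc_pos hq j).ne']
  simp

lemma s_mul_c (j : ℕ) : sE q j * ENNReal.ofReal (q ^ j + 1) = 1 := by
  rw [sE, ← ENNReal.ofReal_mul (by positivity), one_div,
    inv_mul_cancel₀ (hc_pos hq j).ne']
  simp

lemma c_mul_s (j : ℕ) : ENNReal.ofReal (q ^ j + 1) * sE q j = 1 := by
  rw [mul_comm]; exact s_mul_c hq j

variable (a : ℕ → ℕ → ℝ≥0∞)
  (ha00 : a 0 0 = 1) (ha0 : ∀ j, a 0 (j+1) = 0)
  (harec0 : ∀ n, a (n+1) 0 = rE q 0 * a n 0)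
  (harecS : ∀ n j, a (n+1) (j+1) = rE q (j+1) * a n (j+1) + sE q j * a n j)

include ha00 ha0 harec0 harecS

lemma partial_bound : ∀ j M, sE q j * ∑ n ∈ Finset.range M, a n j ≤ 1 := by
  intro j
  induction j with
  | zero =>
    intro M
    induction M with
    | zero => simp
    | succ M ih =>
      rw [Finset.sum_range_succ' _ M]
      simp only [harec0, ha00]
      rw [← Finset.mul_sum, mul_add, mul_one]
      calc sE q 0 * (rE q 0 * ∑ i ∈ Finset.range M, a i 0) + sE q 0
          = rE q 0 * (sE q 0 * ∑ i ∈ Finset.range M, a i 0) + sE q 0 := by ring_nf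
        _ ≤ rE q 0 * 1 + sE q 0 := by gcongr
        _ = 1 := by rw [mul_one, r_add_s hq]
  | succ j ihj =>
    intro M
    induction M with
    | zero => simp
    | succ M ihM =>
      rw [Finset.sum_range_succ' _ M]
      simp only [harecS, ha0]
      rw [add_zero, Finset.sum_add_distrib, ← Finset.mul_sum, ← Finset.mul_sum, mul_add]
      calc sE q (j+1) * (rE q (j+1) * ∑ i ∈ Finset.range M, a i (j+1))
            + sE q (j+1) * (sE q j * ∑ i ∈ Finset.range M, a i j)
          = rE q (j+1) * (sE q (j+1) * ∑ i ∈ Finset.range M, a i (j+1))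
            + sE q (j+1) * (sE q j * ∑ i ∈ Finset.range M, a i j) := by ring_nf
        _ ≤ rE q (j+1) * 1 + sE q (j+1) * 1 := by gcongr; exact ihj M
        _ = 1 := by rw [mul_one, mul_one, r_add_s hq]

lemma S_le (j : ℕ) : ∑' n, a n j ≤ ENNReal.ofReal (q ^ j + 1) := by
  refine Summable.tsum_le_of_sum_range_le ENNReal.summable fun M => ?_
  have h := partial_bound hq a ha00 ha0 harec0 harecS j M
  calc ∑ n ∈ Finset.range M, a n j
      = ENNReal.ofReal (q ^ j + 1) * (sE q j * ∑ n ∈ Finset.range M, a n j) := by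
        rw [← mul_assoc, c_mul_s hq, one_mul]
    _ ≤ ENNReal.ofReal (q ^ j + 1) * 1 := by gcongr
    _ = _ := mul_one _

lemma S_ne_top (j : ℕ) : ∑' n, a n j ≠ ⊤ :=
  (lt_of_le_of_lt (S_le hq a ha00 ha0 harec0 harecS j) ENNReal.ofReal_lt_top).ne

omit hq ha00 ha0 harec0 harecS in
lemma key_cancel (r s S : ℝ≥0∞) (hrs : r + s = 1) (hS : S ≠ ⊤) (hrec : S = r * S + 1) :
    s * S = 1 := by
  have hr1 : r ≤ 1 := le_of_add_le_left hrs.le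
  have hrS : r * S ≠ ⊤ := ENNReal.mul_ne_top (hr1.trans_lt ENNReal.one_lt_top).ne hS
  have h1 : r * S + s * S = r * S + 1 := by
    rw [← add_mul, hrs, one_mul, ← hrec]
  exact (ENNReal.add_right_inj hrS).1 h1

lemma sS_eq_one : ∀ j, sE q j * ∑' n, a n j = 1 := by
  intro j
  induction j with
  | zero =>
    refine key_cancel (rE q 0) (sE q 0) _ (r_add_s hq 0)
      (S_ne_top hq a ha00 ha0 harec0 harecS 0) ?_
    have h2 : ∑' (n : ℕ), a (n+1) 0 = rE q 0 * ∑' n, a n 0 := by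
      simp only [harec0]; exact ENNReal.tsum_mul_left
    calc ∑' n, a n 0 = a 0 0 + ∑' n, a (n+1) 0 := tsum_eq_zero_add' ENNReal.summable
      _ = rE q 0 * ∑' n, a n 0 + 1 := by rw [ha00, h2, add_comm]
  | succ j ihj =>
    refine key_cancel (rE q (j+1)) (sE q (j+1)) _ (r_add_s hq (j+1))
      (S_ne_top hq a ha00 ha0 harec0 harecS (j+1)) ?_
    have h2 : ∑' (n : ℕ), a (n+1) (j+1)
        = rE q (j+1) * ∑' n, a n (j+1) + sE q j * ∑' n, a n j := by
      simp only [harecS]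
      rw [ENNReal.tsum_add, ENNReal.tsum_mul_left, ENNReal.tsum_mul_left]
    calc ∑' n, a n (j+1) = a 0 (j+1) + ∑' n, a (n+1) (j+1) :=
          tsum_eq_zero_add' ENNReal.summable
      _ = rE q (j+1) * ∑' n, a n (j+1) + 1 := by rw [ha0, zero_add, h2, ihj]

lemma S_eq (j : ℕ) : ∑' n, a n j = ENNReal.ofReal (q ^ j + 1) := by
  have h := sS_eq_one hq a ha00 ha0 harec0 harecS j
  calc ∑' n, a n j = (ENNReal.ofReal (q ^ j + 1) * sE q j) * ∑' n, a n j := by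
        rw [c_mul_s hq, one_mul]
    _ = ENNReal.ofReal (q ^ j + 1) * (sE q j * ∑' n, a n j) := mul_assoc _ _ _
    _ = ENNReal.ofReal (q ^ j + 1) := by rw [h, mul_one]

end Abstract

/-! ### Path events and the Markov recursion -/

section Chain
variable {Ω : Type*} [MeasurableSpace Ω] {P : Measure Ω} {q : ℝ} {X : ℕ → Ω → ℕ}

def pev (X : ℕ → Ω → ℕ) (n : ℕ) (f : ℕ → ℕ) : Set Ω := {ω | ∀ k ≤ n, X k ω = f k}

def pext (n : ℕ) (g : Fin (n+1) → ℕ) : ℕ → ℕ :=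
  fun k => if h : k ≤ n then g ⟨k, Nat.lt_succ_of_le h⟩ else 0

lemma pext_eq {n : ℕ} (g : Fin (n+1) → ℕ) {k : ℕ} (h : k ≤ n) :
    pext n g k = g ⟨k, Nat.lt_succ_of_le h⟩ := dif_pos h

lemma measurable_pev (hm : ∀ n, Measurable (X n)) (n : ℕ) (f : ℕ → ℕ) :
    MeasurableSet (pev X n f) := by
  have : pev X n f = ⋂ (k : ℕ), ⋂ (_ : k ≤ n), (X k) ⁻¹' {f k} := by
    ext ω; simp [pev]
  rw [this]
  exact MeasurableSet.iInter fun k => MeasurableSet.iInter fun _ =>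
    (hm k) (measurableSet_singleton _)

lemma decomp (hm : ∀ n, Measurable (X n)) (P : Measure Ω)
    (n i : ℕ) (A : Set Ω) (hA : MeasurableSet A) :
    P ({ω | X n ω = i} ∩ A)
      = ∑' g : {g : Fin (n+1) → ℕ // g (Fin.last n) = i}, P (pev X n (pext n g.1) ∩ A) := by
  have hun : {ω | X n ω = i} ∩ A
      = ⋃ g : {g : Fin (n+1) → ℕ // g (Fin.last n) = i}, (pev X n (pext n g.1) ∩ A) := by
    ext ω
    constructor
    · rintro ⟨hω, hA⟩
      refine Set.mem_iUnion.2 ⟨⟨fun k => X k.1 ω, hω⟩, ?_, hA⟩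
      intro k hk
      rw [pext_eq _ hk]
    · rintro h
      obtain ⟨g, hg, hA⟩ := Set.mem_iUnion.1 h
      refine ⟨?_, hA⟩
      have := hg n le_rfl
      rw [pext_eq _ le_rfl] at this
      exact this.trans g.2
  have hdisj : Pairwise (Function.onFun Disjoint
      (fun g : {g : Fin (n+1) → ℕ // g (Fin.last n) = i} => pev X n (pext n g.1) ∩ A)) := by
    intro g g' hne
    refine Set.disjoint_left.2 fun ω hω hω' => hne ?_
    apply Subtype.ext
    funext k
    have h1 := hω.1 k.1 (Nat.lt_succ_iff.1 k.2)
    have h2 := hω'.1 k.1 (Nat.lt_succ_iff.1 k.2)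
    rw [pext_eq _ (Nat.lt_succ_iff.1 k.2)] at h1 h2
    rw [← Fin.eta k k.2]; rw [← h1, h2]
  rw [hun, measure_iUnion hdisj fun g => (measurable_pev hm n _).inter hA]

lemma pext_last {n i : ℕ} (g : {g : Fin (n+1) → ℕ // g (Fin.last n) = i}) :
    pext n g.1 n = i := by
  rw [pext_eq _ le_rfl]; exact g.2

lemma meas_eq (hm : ∀ n, Measurable (X n)) (n i : ℕ) : MeasurableSet {ω | X n ω = i} :=
  (hm n) (measurableSet_singleton i)

lemma set_and (n : ℕ) (f : ℕ → ℕ) (j : ℕ) :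
    {ω | (∀ k ≤ n, X k ω = f k) ∧ X (n + 1) ω = j}
      = pev X n f ∩ {ω | X (n+1) ω = j} := rfl

lemma pXn (hm : ∀ n, Measurable (X n)) (P : Measure Ω) (n i : ℕ) :
    P {ω | X n ω = i}
      = ∑' g : {g : Fin (n+1) → ℕ // g (Fin.last n) = i}, P (pev X n (pext n g.1)) := by
  have := decomp hm P n i Set.univ MeasurableSet.univ
  simpa using this

lemma step_up (hX : IsQChain P X q) (n i : ℕ) :
    P ({ω | X n ω = i} ∩ {ω | X (n+1) ω = i + 1})
      = ENNReal.ofReal (1 / (q ^ i + 1)) * P {ω | X n ω = i} := by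
  obtain ⟨hm, -, hstep⟩ := hX
  rw [decomp hm P n i _ (meas_eq hm (n+1) (i+1)), pXn hm P n i, ← ENNReal.tsum_mul_left]
  congr 1
  funext g
  have h1 := (hstep n (pext n g.1)).1
  rw [set_and] at h1
  rw [pext_last] at h1
  rw [h1]
  rfl

lemma step_stay (hX : IsQChain P X q) (n i : ℕ) :
    P ({ω | X n ω = i} ∩ {ω | X (n+1) ω = i})
      = ENNReal.ofReal (q ^ i / (q ^ i + 1)) * P {ω | X n ω = i} := by
  obtain ⟨hm, -, hstep⟩ := hX
  rw [decomp hm P n i _ (meas_eq hm (n+1) i), pXn hm P n i, ← ENNReal.tsum_mul_left]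
  congr 1
  funext g
  have h1 := (hstep n (pext n g.1)).2.1
  rw [set_and] at h1
  rw [pext_last] at h1
  rw [h1]
  rfl

lemma step_other (hX : IsQChain P X q) (n i j : ℕ) (h1 : j ≠ i) (h2 : j ≠ i + 1) :
    P ({ω | X n ω = i} ∩ {ω | X (n+1) ω = j}) = 0 := by
  obtain ⟨hm, -, hstep⟩ := hX
  rw [decomp hm P n i _ (meas_eq hm (n+1) j)]
  refine (ENNReal.tsum_eq_zero).2 fun g => ?_
  have h0 := (hstep n (pext n g.1)).2.2 j
  rw [set_and, pext_last] at h0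
  exact h0 h1 h2

lemma decompX (hm : ∀ n, Measurable (X n)) (P : Measure Ω) (n j : ℕ) :
    P {ω | X (n+1) ω = j} = ∑' i : ℕ, P ({ω | X n ω = i} ∩ {ω | X (n+1) ω = j}) := by
  have hun : {ω | X (n+1) ω = j} = ⋃ i : ℕ, ({ω | X n ω = i} ∩ {ω | X (n+1) ω = j}) := by
    ext ω
    simp only [Set.mem_setOf_eq, Set.mem_iUnion, Set.mem_inter_iff]
    exact ⟨fun h => ⟨X n ω, rfl, h⟩, fun ⟨i, _, h⟩ => h⟩
  have hd : Pairwise (Function.onFun Disjoint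
      (fun i : ℕ => {ω | X n ω = i} ∩ {ω | X (n+1) ω = j})) := by
    intro i i' hne
    refine Set.disjoint_left.2 fun ω hω hω' => hne ?_
    exact hω.1.symm.trans hω'.1
  conv_lhs => rw [hun]
  rw [measure_iUnion hd fun i => (meas_eq hm n i).inter (meas_eq hm (n+1) j)]

lemma rec0 (hX : IsQChain P X q) (hm : ∀ n, Measurable (X n)) (n : ℕ) :
    P {ω | X (n+1) ω = 0}
      = ENNReal.ofReal (q ^ 0 / (q ^ 0 + 1)) * P {ω | X n ω = 0} := by
  rw [decompX hm P n 0]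
  rw [tsum_eq_single 0 ?_]
  · exact step_stay hX n 0
  · intro i hi
    exact step_other hX n i 0 (Ne.symm hi) (by omega)

lemma recS (hX : IsQChain P X q) (hm : ∀ n, Measurable (X n)) (n j : ℕ) :
    P {ω | X (n+1) ω = j + 1}
      = ENNReal.ofReal (q ^ (j+1) / (q ^ (j+1) + 1)) * P {ω | X n ω = j+1}
        + ENNReal.ofReal (1 / (q ^ j + 1)) * P {ω | X n ω = j} := by
  rw [decompX hm P n (j+1)]
  rw [tsum_eq_sum (s := {j+1, j}) ?_]
  · rw [Finset.sum_pair (by omega)]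
    rw [step_stay hX n (j+1), step_up hX n j]
  · intro i hi
    simp only [Finset.mem_insert, Finset.mem_singleton] at hi
    push_neg at hi
    exact step_other hX n i (j+1) (Ne.symm hi.1) (by omega)

lemma a_zero [IsProbabilityMeasure P] (h0 : ∀ᵐ ω ∂P, X 0 ω = 0) :
    P {ω | X 0 ω = 0} = 1 := by
  rw [← measure_univ (μ := P)]
  apply measure_congr
  filter_upwards [h0] with ω hω
  exact eq_true hω

lemma a_zero' (h0 : ∀ᵐ ω ∂P, X 0 ω = 0) (j : ℕ) (hj : j ≠ 0) :
    P {ω | X 0 ω = j} = 0 := by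
  have : {ω | X 0 ω = j} ⊆ {ω | ¬ X 0 ω = 0} := fun ω hω => by
    simp only [Set.mem_setOf_eq] at hω ⊢; omega
  exact measure_mono_null this (ae_iff.1 h0)

/-! ### Hitting time via the layer-cake formula -/

lemma tsum_ind (c : ℝ≥0∞) (h : c = ⊤ ∨ ∃ k : ℕ, c = k) :
    ∑' n : ℕ, (if (n : ℝ≥0∞) < c then (1 : ℝ≥0∞) else 0) = c := by
  rcases h with h | ⟨k, h⟩
  · subst h
    have : ∀ n : ℕ, (if (n : ℝ≥0∞) < ⊤ then (1:ℝ≥0∞) else 0) = 1 := fun n =>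
      if_pos (ENNReal.natCast_ne_top n).lt_top
    simp only [this]
    exact ENNReal.tsum_const_eq_top_of_ne_zero one_ne_zero
  · subst h
    rw [tsum_eq_sum (s := Finset.range k) ?_]
    · rw [Finset.sum_congr rfl fun n hn => if_pos (by
        exact_mod_cast Nat.cast_lt.2 (Finset.mem_range.1 hn))]
      simp
    · intro n hn
      rw [if_neg]
      exact not_lt.2 (by exact_mod_cast Nat.not_lt.1 fun hh => hn (Finset.mem_range.2 hh))

noncomputable def tau (X : ℕ → Ω → ℕ) (N : ℕ) (ω : Ω) : ℝ≥0∞ :=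
  sInf {t : ℝ≥0∞ | ∃ m : ℕ, X m ω = N ∧ t = m}

lemma tau_values (N : ℕ) (ω : Ω) : tau X N ω = ⊤ ∨ ∃ k : ℕ, tau X N ω = k := by
  by_cases h : ∃ m : ℕ, X m ω = N
  · right
    set m₀ := Nat.find h with hm₀
    refine ⟨m₀, le_antisymm (sInf_le ⟨m₀, Nat.find_spec h, rfl⟩) ?_⟩
    refine le_sInf ?_
    rintro t ⟨m, hm, rfl⟩
    exact_mod_cast Nat.cast_le.2 (Nat.find_min' h hm)
  · left
    have he : {t : ℝ≥0∞ | ∃ m : ℕ, X m ω = N ∧ t = m} = ∅ := by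
      rw [Set.eq_empty_iff_forall_notMem]
      rintro t ⟨m, hm, rfl⟩
      exact h ⟨m, hm⟩
    rw [tau, he, sInf_empty]

lemma tau_gt (N : ℕ) (ω : Ω) (n : ℕ) :
    ((n : ℝ≥0∞) < tau X N ω) ↔ ∀ m ≤ n, X m ω ≠ N := by
  constructor
  · intro h m hm hN
    have : tau X N ω ≤ m := sInf_le ⟨m, hN, rfl⟩
    exact absurd (this.trans_lt' h) (by exact_mod_cast Nat.not_lt.2 hm)
  · intro h
    refine lt_of_lt_of_le (by exact_mod_cast Nat.lt_succ_self n : (n:ℝ≥0∞) < (n+1 : ℕ))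
      (le_sInf ?_)
    rintro t ⟨m, hm, rfl⟩
    have : n + 1 ≤ m := by
      by_contra hc
      exact h m (by omega) hm
    exact_mod_cast Nat.cast_le.2 this

lemma lintegral_tau (N : ℕ) (hm : ∀ n, Measurable (X n)) (P : Measure Ω) :
    ∫⁻ ω, tau X N ω ∂P = ∑' n : ℕ, P {ω | ∀ m ≤ n, X m ω ≠ N} := by
  have hset : ∀ n : ℕ, MeasurableSet {ω | ∀ m ≤ n, X m ω ≠ N} := by
    intro n
    have : {ω | ∀ m ≤ n, X m ω ≠ N} = ⋂ (m : ℕ), ⋂ (_ : m ≤ n), (X m) ⁻¹' {N}ᶜ := by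
      ext ω; simp
    rw [this]
    exact MeasurableSet.iInter fun m => MeasurableSet.iInter fun _ =>
      (hm m) (measurableSet_singleton N).compl
  have hpt : ∀ ω, tau X N ω
      = ∑' n : ℕ, Set.indicator {ω | ∀ m ≤ n, X m ω ≠ N} (fun _ => (1:ℝ≥0∞)) ω := by
    intro ω
    rw [← tsum_ind (tau X N ω) (tau_values N ω)]
    congr 1
    funext n
    rw [Set.indicator_apply]
    congr 1
    simp only [eq_iff_iff, Set.mem_setOf_eq]
    exact tau_gt N ω n
  calc ∫⁻ ω, tau X N ω ∂P
      = ∫⁻ ω, ∑' n : ℕ, Set.indicator {ω | ∀ m ≤ n, X m ω ≠ N} (fun _ => (1:ℝ≥0∞)) ω ∂P := by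
        congr 1; funext ω; exact hpt ω
    _ = ∑' n : ℕ, ∫⁻ ω, Set.indicator {ω | ∀ m ≤ n, X m ω ≠ N} (fun _ => (1:ℝ≥0∞)) ω ∂P :=
        lintegral_tsum fun n => ((measurable_const).indicator (hset n)).aemeasurable
    _ = ∑' n : ℕ, P {ω | ∀ m ≤ n, X m ω ≠ N} := by
        congr 1; funext n; exact lintegral_indicator_one (hset n)

/-! ### Good event and monotone paths -/

lemma det_mono {g : ℕ → ℕ} (hstep : ∀ k, g (k+1) = g k ∨ g (k+1) = g k + 1) :
    Monotone g := monotone_nat_of_le_succ fun k => by rcases hstep k with h | h <;> omega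

lemma det_hit {g : ℕ → ℕ} (h0 : g 0 = 0)
    (hstep : ∀ k, g (k+1) = g k ∨ g (k+1) = g k + 1) :
    ∀ n N, N ≤ g n → ∃ m ≤ n, g m = N := by
  intro n
  induction n with
  | zero => intro N hN; exact ⟨0, le_rfl, by omega⟩
  | succ n ih =>
    intro N hN
    rcases le_or_gt N (g n) with h | h
    · obtain ⟨m, hm, hgm⟩ := ih N h
      exact ⟨m, hm.trans (Nat.le_succ n), hgm⟩
    · refine ⟨n+1, le_rfl, ?_⟩
      rcases hstep n with hh | hh <;> omega

lemma good_ae (hX : IsQChain P X q) (h0 : ∀ᵐ ω ∂P, X 0 ω = 0) :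
    ∀ᵐ ω ∂P, X 0 ω = 0 ∧ ∀ n, (X (n+1) ω = X n ω ∨ X (n+1) ω = X n ω + 1) := by
  refine h0.and (ae_all_iff.2 fun n => ?_)
  rw [ae_iff]
  have hsub : {ω | ¬(X (n+1) ω = X n ω ∨ X (n+1) ω = X n ω + 1)}
      ⊆ ⋃ (i : ℕ), ⋃ (j : ℕ),
        {ω | (X n ω = i ∧ X (n+1) ω = j) ∧ (j ≠ i ∧ j ≠ i + 1)} := by
    intro ω hω
    push_neg at hω
    simp only [Set.mem_iUnion]
    exact ⟨X n ω, X (n+1) ω, ⟨⟨rfl, rfl⟩, hω.1, hω.2⟩⟩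
  refine measure_mono_null hsub (measure_iUnion_null fun i => measure_iUnion_null fun j => ?_)
  by_cases hc : j ≠ i ∧ j ≠ i + 1
  · refine measure_mono_null (fun ω hω => ?_) (step_other (X := X) hX n i j hc.1 hc.2)
    exact ⟨hω.1.1, hω.1.2⟩
  · have : {ω | (X n ω = i ∧ X (n+1) ω = j) ∧ (j ≠ i ∧ j ≠ i + 1)} = ∅ := by
      ext ω; simp only [Set.mem_setOf_eq, Set.mem_empty_iff_false, iff_false]
      tauto
    rw [this]; exact measure_empty

lemma notYet_eq (hX : IsQChain P X q) (h0 : ∀ᵐ ω ∂P, X 0 ω = 0) (n N : ℕ) :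
    P {ω | ∀ m ≤ n, X m ω ≠ N} = P {ω | X n ω < N} := by
  refine measure_congr (Filter.eventuallyEq_set.2 ?_)
  filter_upwards [good_ae hX h0] with ω hg
  obtain ⟨hω0, hωs⟩ := hg
  constructor
  · intro h
    by_contra hc
    obtain ⟨m, hm, hgm⟩ := det_hit (g := fun m => X m ω) hω0 hωs n N (Nat.not_lt.1 hc)
    exact h m hm hgm
  · intro h m hm hN
    have h2 : X m ω ≤ X n ω := det_mono (g := fun m => X m ω) hωs hm
    omega

lemma lt_decomp (hm : ∀ n, Measurable (X n)) (P : Measure Ω) (n N : ℕ) :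
    P {ω | X n ω < N} = ∑ j ∈ Finset.range N, P {ω | X n ω = j} := by
  have hun : {ω | X n ω < N} = ⋃ j ∈ Finset.range N, {ω | X n ω = j} := by
    ext ω
    simp only [Set.mem_setOf_eq, Set.mem_iUnion, Finset.mem_range]
    exact ⟨fun h => ⟨X n ω, h, rfl⟩, fun ⟨j, hj, h⟩ => h ▸ hj⟩
  have hd : (↑(Finset.range N) : Set ℕ).PairwiseDisjoint (fun j => {ω | X n ω = j}) := by
    intro i _ j _ hne
    refine Set.disjoint_left.2 fun ω hω hω' => hne (hω.symm.trans hω')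
  rw [hun]
  exact measure_biUnion_finset hd fun j _ => (hm n) (measurableSet_singleton j)

end Chain

end QChainAux

open QChainAux in
/-- Expected hitting time of state `N` is `∑_{i<N} (1 + q^i)`, which equals
`N + (q^N - 1)/(q - 1)` when `q ≠ 1`. -/
theorem stmt5 {Ω : Type*} [MeasurableSpace Ω] (P : Measure Ω) [IsProbabilityMeasure P]
    (q : ℝ) (X : ℕ → Ω → ℕ) (hq : 0 < q) (hX : IsQChain P X q) (N : ℕ) :
    (∫⁻ ω, sInf {t : ℝ≥0∞ | ∃ m : ℕ, X m ω = N ∧ t = m} ∂P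
        = ENNReal.ofReal (∑ i ∈ Finset.range N, (1 + q ^ i))) ∧
      (q ≠ 1 →
        ∑ i ∈ Finset.range N, (1 + q ^ i) = N + (q ^ N - 1) / (q - 1)) := by
  have hm := hX.1
  have h0 := hX.2.1
  constructor
  · -- the main computation
    set a : ℕ → ℕ → ℝ≥0∞ := fun n j => P {ω | X n ω = j} with ha
    have ha00 : a 0 0 = 1 := a_zero h0
    have ha0 : ∀ j, a 0 (j+1) = 0 := fun j => a_zero' h0 (j+1) (by omega)
    have harec0 : ∀ n, a (n+1) 0 = rE q 0 * a n 0 := fun n => rec0 hX hm n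
    have harecS : ∀ n j, a (n+1) (j+1) = rE q (j+1) * a n (j+1) + sE q j * a n j :=
      fun n j => recS hX hm n j
    calc ∫⁻ ω, sInf {t : ℝ≥0∞ | ∃ m : ℕ, X m ω = N ∧ t = m} ∂P
        = ∑' n : ℕ, P {ω | ∀ m ≤ n, X m ω ≠ N} := lintegral_tau N hm P
      _ = ∑' n : ℕ, P {ω | X n ω < N} := by
          congr 1; funext n; exact notYet_eq hX h0 n N
      _ = ∑' n : ℕ, ∑ j ∈ Finset.range N, a n j := by
          congr 1; funext n; exact lt_decomp hm P n N
      _ = ∑ j ∈ Finset.range N, ∑' n : ℕ, a n j :=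
          Summable.tsum_finsetSum (fun _ _ => ENNReal.summable)
      _ = ∑ j ∈ Finset.range N, ENNReal.ofReal (q ^ j + 1) :=
          Finset.sum_congr rfl fun j _ => S_eq hq a ha00 ha0 harec0 harecS j
      _ = ENNReal.ofReal (∑ i ∈ Finset.range N, (1 + q ^ i)) := by
          rw [ENNReal.ofReal_sum_of_nonneg fun i _ => by positivity]
          exact Finset.sum_congr rfl fun i _ => by rw [add_comm]
  · intro hq1
    rw [Finset.sum_add_distrib, Finset.sum_const, Finset.card_range, geom_sum_eq hq1 N]
    simp
end

section
/- (Phase transition for the generalized growth chain.) (a) If 0 < α(i) < 1 for all i and (α(i)) is strictly decreasing with α(i) → 0 as i → ∞, then lim_{n→∞} E[X_n^α]/n = 1. (b) If 0 < α(i) < 1 for all i and (α(i)) is strictly increasing with α(i) → 1 as i → ∞, then lim_{n→∞} E[X_n^α]/n = 0. (c) If α(i) = 1/2 for all i, then lim_{n→∞} E[X_n^α]/n = 1/2. -/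
open MeasureTheory Filter Topology

/-- `X` is a Markov chain on `ℕ` with `X 0 = 0` and transition probabilities
`T(i, i) = α i` ("failure"), `T(i, i+1) = 1 - α i` ("success"), `T(i, j) = 0` otherwise,
encoded by conditioning on every finite path. -/
def IsGrowthChain {Ω : Type*} [MeasurableSpace Ω] (P : Measure Ω)
    (X : ℕ → Ω → ℕ) (α : ℕ → ℝ) : Prop :=
  (∀ n, Measurable (X n)) ∧
  (∀ᵐ ω ∂P, X 0 ω = 0) ∧
  ∀ (n : ℕ) (f : ℕ → ℕ),
    P {ω | (∀ k ≤ n, X k ω = f k) ∧ X (n + 1) ω = f n + 1}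
      = ENNReal.ofReal (1 - α (f n)) * P {ω | ∀ k ≤ n, X k ω = f k} ∧
    P {ω | (∀ k ≤ n, X k ω = f k) ∧ X (n + 1) ω = f n}
      = ENNReal.ofReal (α (f n)) * P {ω | ∀ k ≤ n, X k ω = f k} ∧
    ∀ j : ℕ, j ≠ f n → j ≠ f n + 1 →
      P {ω | (∀ k ≤ n, X k ω = f k) ∧ X (n + 1) ω = j} = 0

open Finset

section auxlemmas

private lemma key_sum (α : ℕ → ℝ) (m : ℕ → ℕ → ℝ)
    (hrec0 : ∀ n, m (n+1) 0 = α 0 * m n 0)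
    (hrec : ∀ n j, m (n+1) (j+1) = α (j+1) * m n (j+1) + (1 - α j) * m n j)
    (J n : ℕ) :
    (∑ j ∈ range (J+1), m (n+1) j) = (∑ j ∈ range (J+1), m n j) - (1 - α J) * m n J := by
  rw [Finset.sum_range_succ' (fun j => m (n+1) j) J, hrec0]
  have h1 : ∑ j ∈ range J, m (n+1) (j+1)
      = ∑ j ∈ range J, (α (j+1) * m n (j+1) + (1 - α j) * m n j) :=
    Finset.sum_congr rfl fun j _ => hrec n j
  rw [h1, Finset.sum_add_distrib]
  have h2 : ∑ j ∈ range J, α (j+1) * m n (j+1)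
      = (∑ j ∈ range (J+1), α j * m n j) - α 0 * m n 0 := by
    rw [Finset.sum_range_succ' (fun j => α j * m n j) J]; ring
  have h3 : ∑ j ∈ range J, (1 - α j) * m n j
      = (∑ j ∈ range (J+1), (1 - α j) * m n j) - (1 - α J) * m n J := by
    rw [Finset.sum_range_succ]; ring
  rw [h2, h3]
  have h4 : (∑ j ∈ range (J+1), α j * m n j) + (∑ j ∈ range (J+1), (1 - α j) * m n j)
      = ∑ j ∈ range (J+1), m n j := by
    rw [← Finset.sum_add_distrib]; exact Finset.sum_congr rfl fun j _ => by ring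
  linarith [h4]

private lemma m_to_zero (α : ℕ → ℝ) (hα : ∀ i, 0 ≤ α i ∧ α i < 1) (m : ℕ → ℕ → ℝ)
    (hm0 : ∀ n j, 0 ≤ m n j)
    (hrec0 : ∀ n, m (n+1) 0 = α 0 * m n 0)
    (hrec : ∀ n j, m (n+1) (j+1) = α (j+1) * m n (j+1) + (1 - α j) * m n j)
    (j : ℕ) : Tendsto (fun n => m n j) atTop (𝓝 0) := by
  set s : ℕ → ℝ := fun n => ∑ i ∈ range (j+1), m n i with hs
  have hanti : Antitone s := by
    refine antitone_nat_of_succ_le fun n => ?_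
    have := key_sum α m hrec0 hrec j n
    have h1 : 0 ≤ (1 - α j) * m n j :=
      mul_nonneg (by linarith [(hα j).2]) (hm0 n j)
    simp only [hs]; linarith
  have hbdd : ∀ n, 0 ≤ s n := fun n => Finset.sum_nonneg fun i _ => hm0 n i
  obtain ⟨l, hl⟩ : ∃ l, Tendsto s atTop (𝓝 l) :=
    ⟨⨅ n, s n, tendsto_atTop_ciInf hanti ⟨0, fun x ⟨n, hn⟩ => hn ▸ hbdd n⟩⟩
  have hdiff : Tendsto (fun n => s n - s (n+1)) atTop (𝓝 0) := by
    have := hl.sub (hl.comp (tendsto_add_atTop_nat 1))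
    simpa using this
  have heq : ∀ n, m n j = (s n - s (n+1)) / (1 - α j) := by
    intro n
    have := key_sum α m hrec0 hrec j n
    have hne : (1 - α j) ≠ 0 := by linarith [(hα j).2]
    field_simp
    simp only [hs]; linarith
  have : Tendsto (fun n => (s n - s (n+1)) / (1 - α j)) atTop (𝓝 (0 / (1 - α j))) :=
    hdiff.div_const _
  simpa [heq] using (funext heq ▸ (by simpa using this) : Tendsto (fun n => m n j) atTop (𝓝 0))

private lemma weighted_to_zero (m : ℕ → ℕ → ℝ)
    (hm0 : ∀ n j, 0 ≤ m n j)
    (hmz : ∀ j, Tendsto (fun n => m n j) atTop (𝓝 0))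
    (hsum : ∀ n, ∑ j ∈ range (n+1), m n j = 1)
    (g : ℕ → ℝ) (hg0 : ∀ j, 0 ≤ g j) (hg1 : ∀ j, g j ≤ 1)
    (hgl : Tendsto g atTop (𝓝 0)) :
    Tendsto (fun n => ∑ j ∈ range (n+1), g j * m n j) atTop (𝓝 0) := by
  rw [Metric.tendsto_atTop]
  intro ε hε
  obtain ⟨J, hJ⟩ : ∃ J, ∀ j ≥ J, g j < ε/2 :=
    eventually_atTop.1 (hgl.eventually_lt_const (half_pos hε))
  have hS : Tendsto (fun n => ∑ j ∈ range J, m n j) atTop (𝓝 0) := by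
    have := tendsto_finset_sum (range J) (fun j (_ : j ∈ range J) => hmz j)
    simpa using this
  obtain ⟨N, hN⟩ : ∃ N, ∀ n ≥ N, (∑ j ∈ range J, m n j) < ε/2 :=
    eventually_atTop.1 (hS.eventually_lt_const (half_pos hε))
  refine ⟨max N J, fun n hn => ?_⟩
  have hnN : n ≥ N := le_trans (le_max_left _ _) hn
  have hnJ : J ≤ n + 1 := le_trans (le_trans (le_max_right _ _) hn) (Nat.le_succ n)
  have hsplit : ∑ j ∈ range (n+1), g j * m n j
      = (∑ j ∈ range J, g j * m n j) + ∑ j ∈ Finset.Ico J (n+1), g j * m n j := by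
    rw [Finset.range_eq_Ico, ← Finset.sum_Ico_consecutive _ (Nat.zero_le J) hnJ, Finset.range_eq_Ico]
  have hb1 : (∑ j ∈ range J, g j * m n j) ≤ ∑ j ∈ range J, m n j :=
    Finset.sum_le_sum fun j _ => by
      nlinarith [hg1 j, hm0 n j, hg0 j]
  have hb2 : (∑ j ∈ Finset.Ico J (n+1), g j * m n j) ≤ ε/2 := by
    have h1 : (∑ j ∈ Finset.Ico J (n+1), g j * m n j)
        ≤ ∑ j ∈ Finset.Ico J (n+1), (ε/2) * m n j :=
      Finset.sum_le_sum fun j hj => by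
        have := hJ j (Finset.mem_Ico.1 hj).1
        nlinarith [hm0 n j]
    have h2 : (∑ j ∈ Finset.Ico J (n+1), m n j) ≤ 1 := by
      have : (∑ j ∈ Finset.Ico J (n+1), m n j) ≤ ∑ j ∈ range (n+1), m n j := by
        rw [Finset.range_eq_Ico]
        exact Finset.sum_le_sum_of_subset_of_nonneg
          (Finset.Ico_subset_Ico (Nat.zero_le _) le_rfl) fun j hj _ => hm0 n j
      linarith [hsum n]
    rw [← Finset.mul_sum] at h1
    nlinarith
  have hnn : 0 ≤ ∑ j ∈ range (n+1), g j * m n j :=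
    Finset.sum_nonneg fun j _ => mul_nonneg (hg0 j) (hm0 n j)
  rw [Real.dist_eq, sub_zero, abs_of_nonneg hnn]
  calc ∑ j ∈ range (n+1), g j * m n j
      = _ := hsplit
    _ ≤ (∑ j ∈ range J, m n j) + ε/2 := by linarith
    _ < ε/2 + ε/2 := by linarith [hN n hnN]
    _ = ε := by ring

private lemma E_rec (α : ℕ → ℝ) (m : ℕ → ℕ → ℝ)
    (hrec : ∀ n j, m (n+1) (j+1) = α (j+1) * m n (j+1) + (1 - α j) * m n j)
    (hz : ∀ n j, n < j → m n j = 0) (n : ℕ) :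
    (∑ j ∈ range (n+2), (j:ℝ) * m (n+1) j)
      = (∑ j ∈ range (n+1), (j:ℝ) * m n j) + ∑ j ∈ range (n+1), (1 - α j) * m n j := by
  rw [Finset.sum_range_succ' (fun j => (j:ℝ) * m (n+1) j) (n+1)]
  simp only [Nat.cast_zero, zero_mul, add_zero]
  have h1 : ∀ j ∈ range (n+1), ((j+1 : ℕ):ℝ) * m (n+1) (j+1)
      = (((j+1:ℕ):ℝ) * (α (j+1) * m n (j+1))
        + ((j:ℝ) * m n j - (j:ℝ) * (α j * m n j) + (1 - α j) * m n j)) := by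
    intro j _
    rw [hrec n j]
    push_cast
    ring
  rw [Finset.sum_congr rfl h1, Finset.sum_add_distrib]
  have hshift : (∑ j ∈ range (n+1), ((j+1:ℕ):ℝ) * (α (j+1) * m n (j+1)))
      = ∑ j ∈ range (n+1), (j:ℝ) * (α j * m n j) := by
    have e1 := Finset.sum_range_succ' (fun j => (j:ℝ) * (α j * m n j)) (n+1)
    have e2 := Finset.sum_range_succ (fun j => (j:ℝ) * (α j * m n j)) (n+1)
    simp only [Nat.cast_zero, zero_mul, add_zero, hz n (n+1) (Nat.lt_succ_self n),
      mul_zero] at e1 e2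
    rw [← e1, e2]
  rw [hshift, Finset.sum_add_distrib, Finset.sum_sub_distrib]
  ring

private noncomputable def Fext (n : ℕ) (g : Fin (n+1) → ℕ) : ℕ → ℕ :=
  fun k => if h : k ≤ n then g ⟨k, Nat.lt_succ_of_le h⟩ else 0

private lemma fiber_decomp {Ω : Type*} [MeasurableSpace Ω] (P : Measure Ω)
    (X : ℕ → Ω → ℕ) (hm : ∀ n, Measurable (X n)) (n : ℕ)
    (A : Set Ω) (hA : MeasurableSet A) :
    P A = ∑' g : Fin (n+1) → ℕ, P (A ∩ {ω | ∀ k ≤ n, X k ω = Fext n g k}) := by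
  have hE : ∀ g : Fin (n+1) → ℕ, MeasurableSet {ω | ∀ k ≤ n, X k ω = Fext n g k} := by
    intro g
    have : {ω | ∀ k ≤ n, X k ω = Fext n g k}
        = ⋂ k ∈ Finset.range (n+1), (X k) ⁻¹' {Fext n g k} := by
      ext ω
      simp only [Set.mem_setOf_eq, Set.mem_iInter, Finset.mem_range, Set.mem_preimage,
        Set.mem_singleton_iff, Nat.lt_succ_iff]
    rw [this]
    exact MeasurableSet.biInter (Set.to_countable _) fun k _ => (hm k) (measurableSet_singleton _)
  have hcover : (⋃ g : Fin (n+1) → ℕ, A ∩ {ω | ∀ k ≤ n, X k ω = Fext n g k}) = A := by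
    ext ω
    simp only [Set.mem_iUnion, Set.mem_inter_iff, Set.mem_setOf_eq]
    constructor
    · rintro ⟨g, hg, -⟩; exact hg
    · intro hω
      refine ⟨fun k => X k ω, hω, fun k hk => ?_⟩
      simp [Fext, hk]
  have hdisj : Pairwise (Function.onFun Disjoint
      (fun g : Fin (n+1) → ℕ => A ∩ {ω | ∀ k ≤ n, X k ω = Fext n g k})) := by
    intro g g' hgg'
    rw [Function.onFun, Set.disjoint_left]
    rintro ω ⟨-, hg⟩ ⟨-, hg'⟩
    apply hgg'
    funext k
    have h1 := hg k (Nat.lt_succ_iff.1 k.isLt)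
    have h2 := hg' k (Nat.lt_succ_iff.1 k.isLt)
    have e1 : Fext n g k = g k := by
      simp only [Fext, dif_pos (Nat.lt_succ_iff.1 k.isLt)]
    have e2 : Fext n g' k = g' k := by
      simp only [Fext, dif_pos (Nat.lt_succ_iff.1 k.isLt)]
    rw [e1] at h1; rw [e2] at h2
    rw [← h1, ← h2]
  conv_lhs => rw [← hcover]
  rw [measure_iUnion hdisj fun g => hA.inter (hE g)]

private lemma marg_eq {Ω : Type*} [MeasurableSpace Ω] (P : Measure Ω)
    (X : ℕ → Ω → ℕ) (hm : ∀ n, Measurable (X n)) (n j : ℕ) :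
    P {ω | X n ω = j}
      = ∑' g : Fin (n+1) → ℕ,
          (if Fext n g n = j then P {ω | ∀ k ≤ n, X k ω = Fext n g k} else 0) := by
  have hA : MeasurableSet {ω | X n ω = j} := (hm n) (measurableSet_singleton j)
  rw [fiber_decomp P X hm n _ hA]
  refine tsum_congr fun g => ?_
  by_cases h : Fext n g n = j
  · rw [if_pos h]
    congr 1
    ext ω
    simp only [Set.mem_inter_iff, Set.mem_setOf_eq]
    constructor
    · rintro ⟨-, h2⟩; exact h2
    · intro h2; exact ⟨by rw [h2 n le_rfl, h], h2⟩
  · rw [if_neg h]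
    have he : ({ω | X n ω = j} ∩ {ω | ∀ k ≤ n, X k ω = Fext n g k}) = ∅ := by
      ext ω
      simp only [Set.mem_inter_iff, Set.mem_setOf_eq, Set.mem_empty_iff_false, iff_false, not_and]
      intro h1 h2
      exact h (by rw [← h2 n le_rfl, h1])
    rw [he, measure_empty]

private lemma tsum_ite_mul' {ι : Type*} [Countable ι] (c : ι → Prop) [DecidablePred c]
    (r : ENNReal) (p : ι → ENNReal) :
    ∑' g : ι, (if c g then r * p g else 0) = r * ∑' g : ι, (if c g then p g else 0) := by
  rw [← ENNReal.tsum_mul_left]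
  refine tsum_congr fun g => ?_
  by_cases h : c g
  · rw [if_pos h, if_pos h]
  · rw [if_neg h, if_neg h, mul_zero]

private lemma marg_rec {Ω : Type*} [MeasurableSpace Ω] (P : Measure Ω)
    (α : ℕ → ℝ) (X : ℕ → Ω → ℕ) (hX : IsGrowthChain P X α) (n j : ℕ) :
    P {ω | X (n+1) ω = j}
      = ∑' g : Fin (n+1) → ℕ,
          ((if Fext n g n = j then
              ENNReal.ofReal (α j) * P {ω | ∀ k ≤ n, X k ω = Fext n g k} else 0)
           + (if Fext n g n + 1 = j then
              ENNReal.ofReal (1 - α (Fext n g n)) * P {ω | ∀ k ≤ n, X k ω = Fext n g k}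
            else 0)) := by
  obtain ⟨hm, -, htrans⟩ := hX
  have hA : MeasurableSet {ω | X (n+1) ω = j} := (hm (n+1)) (measurableSet_singleton j)
  rw [fiber_decomp P X hm n _ hA]
  refine tsum_congr fun g => ?_
  have hset : ∀ i : ℕ, ({ω | X (n+1) ω = i} ∩ {ω | ∀ k ≤ n, X k ω = Fext n g k})
      = {ω | (∀ k ≤ n, X k ω = Fext n g k) ∧ X (n + 1) ω = i} := by
    intro i; ext ω
    simp only [Set.mem_inter_iff, Set.mem_setOf_eq]
    tauto
  rw [hset j]
  obtain ⟨h1, h2, h3⟩ := htrans n (Fext n g)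
  by_cases hc1 : Fext n g n = j
  · rw [if_pos hc1, if_neg (by omega), add_zero, ← hc1]
    exact h2
  · rw [if_neg hc1]
    by_cases hc2 : Fext n g n + 1 = j
    · rw [if_pos hc2, zero_add, ← hc2]
      exact h1
    · rw [if_neg hc2, add_zero]
      exact h3 j (fun h => hc1 h.symm) (fun h => hc2 h.symm)

private lemma rec0 {Ω : Type*} [MeasurableSpace Ω] (P : Measure Ω)
    (α : ℕ → ℝ) (X : ℕ → Ω → ℕ) (hX : IsGrowthChain P X α) (n : ℕ) :
    P {ω | X (n+1) ω = 0} = ENNReal.ofReal (α 0) * P {ω | X n ω = 0} := by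
  rw [marg_rec P α X hX n 0, ENNReal.tsum_add]
  have h2 : ∑' g : Fin (n+1) → ℕ,
      (if Fext n g n + 1 = 0 then
        ENNReal.ofReal (1 - α (Fext n g n)) * P {ω | ∀ k ≤ n, X k ω = Fext n g k} else 0)
      = 0 := by
    simp
  rw [h2, add_zero, tsum_ite_mul', ← marg_eq P X hX.1 n 0]

private lemma recS {Ω : Type*} [MeasurableSpace Ω] (P : Measure Ω)
    (α : ℕ → ℝ) (X : ℕ → Ω → ℕ) (hX : IsGrowthChain P X α) (n i : ℕ) :
    P {ω | X (n+1) ω = i+1}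
      = ENNReal.ofReal (α (i+1)) * P {ω | X n ω = i+1}
        + ENNReal.ofReal (1 - α i) * P {ω | X n ω = i} := by
  rw [marg_rec P α X hX n (i+1), ENNReal.tsum_add]
  congr 1
  · rw [tsum_ite_mul', ← marg_eq P X hX.1 n (i+1)]
  · have h : ∀ g : Fin (n+1) → ℕ,
        (if Fext n g n + 1 = i + 1 then
          ENNReal.ofReal (1 - α (Fext n g n)) * P {ω | ∀ k ≤ n, X k ω = Fext n g k} else 0)
        = (if Fext n g n = i then
          ENNReal.ofReal (1 - α i) * P {ω | ∀ k ≤ n, X k ω = Fext n g k} else 0) := by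
      intro g
      by_cases hc : Fext n g n = i
      · rw [if_pos (by omega), if_pos hc, hc]
      · rw [if_neg (by omega), if_neg hc]
    rw [tsum_congr h, tsum_ite_mul', ← marg_eq P X hX.1 n i]

private lemma integral_eq_sum {Ω : Type*} [MeasurableSpace Ω] (P : Measure Ω)
    [IsProbabilityMeasure P] (X : ℕ → Ω → ℕ) (hm : ∀ n, Measurable (X n)) (n : ℕ)
    (hae : ∀ᵐ ω ∂P, X n ω ≤ n) :
    ∫ ω, (X n ω : ℝ) ∂P = ∑ j ∈ range (n+1), (j:ℝ) * (P {ω | X n ω = j}).toReal := by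
  have hms : ∀ j : ℕ, MeasurableSet {ω | X n ω = j} :=
    fun j => (hm n) (measurableSet_singleton j)
  have h1 : (fun ω => (X n ω : ℝ))
      =ᵐ[P] fun ω => ∑ j ∈ range (n+1),
        Set.indicator {ω' | X n ω' = j} (fun _ => (j:ℝ)) ω := by
    filter_upwards [hae] with ω hω
    have : ∀ j ∈ range (n+1), Set.indicator {ω' | X n ω' = j} (fun _ => (j:ℝ)) ω
        = if X n ω = j then (j:ℝ) else 0 := by
      intro j _
      simp [Set.indicator_apply, Set.mem_setOf_eq, eq_comm]
    rw [Finset.sum_congr rfl this, Finset.sum_ite_eq (range (n+1)) (X n ω) (fun j => (j:ℝ)),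
      if_pos (Finset.mem_range.2 (Nat.lt_succ_of_le hω))]
  rw [integral_congr_ae h1, integral_finset_sum]
  · refine Finset.sum_congr rfl fun j _ => ?_
    rw [integral_indicator_const _ (hms j)]
    simp [mul_comm, measureReal_def]
  · exact fun j _ => (integrable_const ((j:ℝ))).indicator (hms j)

end auxlemmas

/-- Phase transition for the generalized growth chain. -/
theorem stmt8 {Ω : Type*} [MeasurableSpace Ω] (P : Measure Ω) [IsProbabilityMeasure P]
    (α : ℕ → ℝ) (X : ℕ → Ω → ℕ) (hα : ∀ i, 0 ≤ α i ∧ α i < 1)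
    (hX : IsGrowthChain P X α) :
    ((∀ i, 0 < α i) → StrictAnti α → Tendsto α atTop (𝓝 0) →
        Tendsto (fun n : ℕ => (∫ ω, (X n ω : ℝ) ∂P) / n) atTop (𝓝 1)) ∧
      ((∀ i, 0 < α i) → StrictMono α → Tendsto α atTop (𝓝 1) →
        Tendsto (fun n : ℕ => (∫ ω, (X n ω : ℝ) ∂P) / n) atTop (𝓝 0)) ∧
      ((∀ i, α i = 1 / 2) →
        Tendsto (fun n : ℕ => (∫ ω, (X n ω : ℝ) ∂P) / n) atTop (𝓝 (1 / 2))) := by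
  have hmeas := hX.1
  have h0 := hX.2.1
  -- initial distribution
  have hν00 : P {ω | X 0 ω = 0} = 1 := by
    have hms0 : MeasurableSet {ω | X 0 ω = 0} := (hmeas 0) (measurableSet_singleton 0)
    rw [← prob_compl_eq_zero_iff hms0]
    exact ae_iff.1 h0
  have hν0S : ∀ j : ℕ, P {ω | X 0 ω = j + 1} = 0 := by
    intro j
    refine measure_mono_null ?_ (ae_iff.1 h0)
    intro ω hω
    simp only [Set.mem_setOf_eq] at hω ⊢
    omega
  -- vanishing above the diagonal
  have hzE : ∀ n j, n < j → P {ω | X n ω = j} = 0 := by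
    intro n
    induction n with
    | zero =>
      intro j hj
      obtain ⟨i, rfl⟩ : ∃ i, j = i + 1 := ⟨j - 1, by omega⟩
      exact hν0S i
    | succ n ih =>
      intro j hj
      obtain ⟨i, rfl⟩ : ∃ i, j = i + 1 := ⟨j - 1, by omega⟩
      rw [recS P α X hX n i, ih (i+1) (by omega), ih i (by omega), mul_zero, mul_zero,
        add_zero]
  -- real-valued marginals
  set m : ℕ → ℕ → ℝ := fun n j => (P {ω | X n ω = j}).toReal with hm_def
  have hm0 : ∀ n j, 0 ≤ m n j := fun n j => ENNReal.toReal_nonneg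
  have hmz : ∀ n j, n < j → m n j = 0 := by
    intro n j hj
    simp only [hm_def, hzE n j hj, ENNReal.toReal_zero]
  have hmrec0 : ∀ n, m (n+1) 0 = α 0 * m n 0 := by
    intro n
    simp only [hm_def]
    rw [rec0 P α X hX n, ENNReal.toReal_mul, ENNReal.toReal_ofReal (hα 0).1]
  have hmrec : ∀ n j, m (n+1) (j+1) = α (j+1) * m n (j+1) + (1 - α j) * m n j := by
    intro n j
    simp only [hm_def]
    rw [recS P α X hX n j, ENNReal.toReal_add
        (ENNReal.mul_ne_top ENNReal.ofReal_ne_top (measure_ne_top P _))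
        (ENNReal.mul_ne_top ENNReal.ofReal_ne_top (measure_ne_top P _)),
      ENNReal.toReal_mul, ENNReal.toReal_mul, ENNReal.toReal_ofReal (hα (j+1)).1,
      ENNReal.toReal_ofReal (by linarith [(hα j).2] : (0:ℝ) ≤ 1 - α j)]
  have hm00 : m 0 0 = 1 := by simp only [hm_def, hν00, ENNReal.toReal_one]
  have hsum : ∀ n, ∑ j ∈ range (n+1), m n j = 1 := by
    intro n
    induction n with
    | zero => simpa using hm00
    | succ n ih =>
      have hk := key_sum α m hmrec0 hmrec (n+1) n
      rw [hk, Finset.sum_range_succ, ih, hmz n (n+1) (Nat.lt_succ_self n)]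
      ring
  -- a.e. bound and a.e. sum-one
  have hsumE : ∀ n, ∑ j ∈ range (n+1), P {ω | X n ω = j} = 1 := by
    intro n
    have hne : ∀ j ∈ range (n+1), P {ω | X n ω = j} ≠ ⊤ := fun j _ => measure_ne_top P _
    have ht : (∑ j ∈ range (n+1), P {ω | X n ω = j}).toReal = 1 := by
      rw [ENNReal.toReal_sum hne]
      exact hsum n
    exact (ENNReal.toReal_eq_one_iff _).1 ht
  have hae : ∀ n, ∀ᵐ ω ∂P, X n ω ≤ n := by
    intro n
    have hdisj : (↑(range (n+1)) : Set ℕ).PairwiseDisjoint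
        (fun j => {ω | X n ω = j}) := by
      intro i _ j _ hij
      rw [Function.onFun, Set.disjoint_left]
      intro ω h1 h2
      exact hij (by rw [← h1, ← h2])
    have hbU : P (⋃ j ∈ range (n+1), {ω | X n ω = j}) = 1 := by
      rw [measure_biUnion_finset hdisj fun j _ => (hmeas n) (measurableSet_singleton j)]
      exact hsumE n
    have hset : (⋃ j ∈ range (n+1), {ω | X n ω = j}) = {ω | X n ω ≤ n} := by
      ext ω
      simp only [Set.mem_iUnion, Set.mem_setOf_eq, Finset.mem_range, exists_prop]
      constructor
      · rintro ⟨j, hj, rfl⟩; omega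
      · intro hω; exact ⟨X n ω, by omega, rfl⟩
    rw [hset] at hbU
    have hmsle : MeasurableSet {ω | X n ω ≤ n} := (hmeas n) measurableSet_Iic
    rw [ae_iff]
    have : {a | ¬ X n a ≤ n} = {ω | X n ω ≤ n}ᶜ := rfl
    rw [this, prob_compl_eq_zero_iff hmsle]
    exact hbU
  -- the expectation and its recursion
  have hInt : ∀ n, ∫ ω, (X n ω : ℝ) ∂P = ∑ j ∈ range (n+1), (j:ℝ) * m n j :=
    fun n => integral_eq_sum P X hmeas n (hae n)
  set b : ℕ → ℝ := fun k => ∑ j ∈ range (k+1), (1 - α j) * m k j with hb_def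
  have hEsum : ∀ n, (∑ j ∈ range (n+1), (j:ℝ) * m n j) = ∑ k ∈ range n, b k := by
    intro n
    induction n with
    | zero => simp
    | succ n ih =>
      have := E_rec α m hmrec hmz n
      rw [show n+1+1 = n+2 from rfl, this, Finset.sum_range_succ b n, ih]
  have hmztend : ∀ j, Tendsto (fun n => m n j) atTop (𝓝 0) :=
    m_to_zero α hα m hm0 hmrec0 hmrec
  -- common final step
  have final : ∀ L : ℝ, Tendsto b atTop (𝓝 L) →
      Tendsto (fun n : ℕ => (∫ ω, (X n ω : ℝ) ∂P) / n) atTop (𝓝 L) := by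
    intro L hbL
    have hc := hbL.cesaro
    refine hc.congr fun n => ?_
    rw [hInt n, hEsum n, div_eq_inv_mul]
  refine ⟨?_, ?_, ?_⟩
  · -- (a)
    intro _ _ hlim
    have ht : Tendsto (fun n => ∑ j ∈ range (n+1), α j * m n j) atTop (𝓝 0) :=
      weighted_to_zero m hm0 hmztend hsum α (fun j => (hα j).1)
        (fun j => le_of_lt (hα j).2) hlim
    have hbL : Tendsto b atTop (𝓝 1) := by
      have h1 : ∀ n, b n = 1 - ∑ j ∈ range (n+1), α j * m n j := by
        intro n
        have h2 : (∑ j ∈ range (n+1), α j * m n j) + b n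
            = ∑ j ∈ range (n+1), m n j := by
          simp only [hb_def]
          rw [← Finset.sum_add_distrib]
          exact Finset.sum_congr rfl fun j _ => by ring
        have h3 := hsum n
        linarith [h2.trans h3]
      have h4 : Tendsto (fun n => 1 - ∑ j ∈ range (n+1), α j * m n j) atTop
          (𝓝 (1 - 0)) := tendsto_const_nhds.sub ht
      simp only [sub_zero] at h4
      exact h4.congr fun n => (h1 n).symm
    exact final 1 hbL
  · -- (b)
    intro _ _ hlim
    have hgl : Tendsto (fun j => 1 - α j) atTop (𝓝 0) := by
      have h4 : Tendsto (fun j => 1 - α j) atTop (𝓝 (1 - 1)) :=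
        tendsto_const_nhds.sub hlim
      simpa using h4
    have hbL : Tendsto b atTop (𝓝 0) :=
      weighted_to_zero m hm0 hmztend hsum (fun j => 1 - α j)
        (fun j => by show (0:ℝ) ≤ 1 - α j; linarith [(hα j).2])
        (fun j => by show 1 - α j ≤ 1; linarith [(hα j).1]) hgl
    exact final 0 hbL
  · -- (c)
    intro hhalf
    have hbL : Tendsto b atTop (𝓝 (1/2)) := by
      have h1 : ∀ n, b n = 1/2 := by
        intro n
        have h2 : b n = ∑ j ∈ range (n+1), (1/2 : ℝ) * m n j := by
          simp only [hb_def]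
          refine Finset.sum_congr rfl fun j _ => ?_
          rw [hhalf j]; norm_num
        rw [h2, ← Finset.mul_sum, hsum n, mul_one]
      rw [funext h1]
      exact tendsto_const_nhds
    exact final (1/2) hbL
end

section
/- (Martingale for the generalized growth chain.) The process Y_n^α := X_n^α − n + Σ_{i=0}^{X_n^α − 1} α(i)/(1 − α(i)) is a martingale with respect to the natural filtration of (X_n^α): each Y_n^α is integrable and E[Y_n^α | X_0^α, ..., X_{n-1}^α] = Y_{n-1}^α for all n ≥ 1. -/
open MeasureTheory Filter Topology

section Aux

variable {Ω : Type*} [MeasurableSpace Ω] {P : Measure Ω} {α : ℕ → ℝ} {X : ℕ → Ω → ℕ}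

/-- Padding of a finite path to a function on `ℕ`. -/
def padPath (n : ℕ) (b : Fin (n + 1) → ℕ) : ℕ → ℕ :=
  fun k => if h : k < n + 1 then b ⟨k, h⟩ else 0

lemma growth_step (hX : IsGrowthChain P X α) (n : ℕ) :
    ∀ᵐ ω ∂P, X (n + 1) ω = X n ω ∨ X (n + 1) ω = X n ω + 1 := by
  rw [ae_iff]
  set T : (Fin (n + 1) → ℕ) × ℕ → Set Ω := fun p =>
    {ω | (∀ k ≤ n, X k ω = padPath n p.1 k) ∧ X (n + 1) ω = p.2 ∧
      p.2 ≠ padPath n p.1 n ∧ p.2 ≠ padPath n p.1 n + 1} with hT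
  have hnull : ∀ p, P (T p) = 0 := by
    intro p
    rcases Set.eq_empty_or_nonempty (T p) with h | ⟨ω, hω⟩
    · simp [h]
    · refine measure_mono_null ?_
        ((hX.2.2 n (padPath n p.1)).2.2 p.2 hω.2.2.1 hω.2.2.2)
      intro x hx
      exact ⟨hx.1, hx.2.1⟩
  refine measure_mono_null ?_ (measure_iUnion_null hnull)
  intro ω hω
  simp only [Set.mem_setOf_eq, not_or] at hω
  refine Set.mem_iUnion.2 ⟨⟨fun k => X (k : ℕ) ω, X (n + 1) ω⟩, ?_⟩
  have hpad : ∀ k ≤ n, padPath n (fun k : Fin (n + 1) => X (k : ℕ) ω) k = X k ω := by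
    intro k hk
    simp [padPath, Nat.lt_succ_of_le hk]
  refine ⟨fun k hk => (hpad k hk).symm, rfl, ?_, ?_⟩
  · rw [hpad n le_rfl]; exact hω.1
  · rw [hpad n le_rfl]; exact hω.2

lemma growth_le (hX : IsGrowthChain P X α) : ∀ n, ∀ᵐ ω ∂P, X n ω ≤ n := by
  intro n
  induction n with
  | zero => filter_upwards [hX.2.1] with ω h; omega
  | succ n ih =>
      filter_upwards [ih, growth_step hX n] with ω h1 h2
      rcases h2 with h2 | h2 <;> omega

lemma Y_integrable [IsProbabilityMeasure P] (hα : ∀ i, 0 ≤ α i ∧ α i < 1)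
    (hX : IsGrowthChain P X α) (Y : ℕ → Ω → ℝ)
    (hY : ∀ n ω, Y n ω
      = (X n ω : ℝ) - n + ∑ i ∈ Finset.range (X n ω), α i / (1 - α i)) (n : ℕ) :
    Integrable (Y n) P := by
  have hterm : ∀ i, 0 ≤ α i / (1 - α i) := fun i =>
    div_nonneg (hα i).1 (by linarith [(hα i).2])
  have hmeas : Measurable (Y n) := by
    have : Y n = (fun m : ℕ => (m : ℝ) - n + ∑ i ∈ Finset.range m, α i / (1 - α i)) ∘ X n :=
      funext fun ω => hY n ω
    rw [this]
    exact (measurable_from_top).comp (hX.1 n)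
  refine ⟨hmeas.aestronglyMeasurable,
    HasFiniteIntegral.of_bounded (C := (n : ℝ) + ∑ i ∈ Finset.range n, α i / (1 - α i)) ?_⟩
  filter_upwards [growth_le hX n] with ω h
  rw [hY, Real.norm_eq_abs]
  have h0 : (0 : ℝ) ≤ X n ω := Nat.cast_nonneg _
  have h1 : (X n ω : ℝ) ≤ n := Nat.cast_le.mpr h
  have h2 : 0 ≤ ∑ i ∈ Finset.range (X n ω), α i / (1 - α i) :=
    Finset.sum_nonneg fun i _ => hterm i
  have h3 : ∑ i ∈ Finset.range (X n ω), α i / (1 - α i)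
      ≤ ∑ i ∈ Finset.range n, α i / (1 - α i) :=
    Finset.sum_le_sum_of_subset_of_nonneg
      (Finset.range_subset_range.2 h) (fun i _ _ => hterm i)
  have h4 : 0 ≤ ∑ i ∈ Finset.range n, α i / (1 - α i) := le_trans h2 h3
  rw [abs_le]
  constructor <;> linarith

lemma pathSet_measurable (hX : IsGrowthChain P X α) (n : ℕ) (f : ℕ → ℕ) :
    MeasurableSet {ω | ∀ k ≤ n, X k ω = f k} := by
  have : {ω | ∀ k ≤ n, X k ω = f k}
      = ⋂ k ∈ Finset.range (n + 1), (X k) ⁻¹' {f k} := by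
    ext ω; simp [Nat.lt_succ_iff]
  rw [this]
  exact MeasurableSet.biInter (Finset.range (n + 1)).countable_toSet
    fun k _ => (hX.1 k) (measurableSet_singleton _)

lemma atom_integral [IsProbabilityMeasure P] (hα : ∀ i, 0 ≤ α i ∧ α i < 1)
    (hX : IsGrowthChain P X α) (Y : ℕ → Ω → ℝ)
    (hY : ∀ n ω, Y n ω
      = (X n ω : ℝ) - n + ∑ i ∈ Finset.range (X n ω), α i / (1 - α i))
    (n : ℕ) (f : ℕ → ℕ) :
    ∫ ω in {ω | ∀ k ≤ n, X k ω = f k}, (Y (n + 1) ω - Y n ω) ∂P = 0 := by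
  set S : ℕ → ℝ := fun m => ∑ i ∈ Finset.range m, α i / (1 - α i) with hS
  set i := f n with hi
  set A := {ω | ∀ k ≤ n, X k ω = f k} with hA
  have hAmeas : MeasurableSet A := pathSet_measurable hX n f
  set Aj : ℕ → Set Ω := fun j => A ∩ (X (n + 1)) ⁻¹' {j} with hAj
  have hAjmeas : ∀ j, MeasurableSet (Aj j) :=
    fun j => hAmeas.inter ((hX.1 (n + 1)) (measurableSet_singleton _))
  have hdisj : Pairwise (Function.onFun Disjoint Aj) := by
    intro j j' hjj'
    refine Set.disjoint_left.2 fun ω hω hω' => hjj' ?_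
    have := hω.2; have := hω'.2
    simp only [Set.mem_preimage, Set.mem_singleton_iff] at *
    omega
  have hUnion : ⋃ j, Aj j = A := by
    ext ω; simp [hAj]
  have hD : Integrable (fun ω => Y (n + 1) ω - Y n ω) P :=
    (Y_integrable hα hX Y hY (n + 1)).sub (Y_integrable hα hX Y hY n)
  set c : ℕ → ℝ := fun j => ((j : ℝ) - (n + 1) + S j) - ((i : ℝ) - n + S i) with hc
  have hterm : ∀ j, ∫ ω in Aj j, (Y (n + 1) ω - Y n ω) ∂P = c j * (P (Aj j)).toReal := by
    intro j
    rw [setIntegral_congr_fun (hAjmeas j) (g := fun _ => c j) ?_, setIntegral_const,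
      smul_eq_mul, mul_comm, measureReal_def]
    intro ω hω
    have hXn1 : X (n + 1) ω = j := hω.2
    have hXn : X n ω = i := hω.1 n le_rfl
    simp only [hY, hXn1, hXn, hc, hS]
    push_cast
    ring
  calc ∫ ω in A, (Y (n + 1) ω - Y n ω) ∂P
      = ∑' j, ∫ ω in Aj j, (Y (n + 1) ω - Y n ω) ∂P := by
        rw [← hUnion, integral_iUnion hAjmeas hdisj (hUnion ▸ hD.integrableOn)]
    _ = 0 := by
        have hzero : ∀ j ∉ ({i, i + 1} : Finset ℕ),
            ∫ ω in Aj j, (Y (n + 1) ω - Y n ω) ∂P = 0 := by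
          intro j hj
          simp only [Finset.mem_insert, Finset.mem_singleton, not_or] at hj
          have hnull : P (Aj j) = 0 := by
            have := (hX.2.2 n f).2.2 j hj.1 hj.2
            convert this using 2
            all_goals (ext ω; simp [hAj, hA])
          rw [hterm j, hnull]
          simp
        rw [tsum_eq_sum hzero, Finset.sum_pair (by omega : i ≠ i + 1),
          hterm i, hterm (i + 1)]
        have hα1 : (0 : ℝ) ≤ α i := (hα i).1
        have hα2 : α i < 1 := (hα i).2
        have hP1 : (P (Aj i)).toReal = α i * (P A).toReal := by
          have heq : Aj i = {ω | (∀ k ≤ n, X k ω = f k) ∧ X (n + 1) ω = f n} := by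
            ext ω; simp [hAj, hA, hi]
          rw [heq, (hX.2.2 n f).2.1, ENNReal.toReal_mul, ENNReal.toReal_ofReal hα1]
        have hP2 : (P (Aj (i + 1))).toReal = (1 - α i) * (P A).toReal := by
          have heq : Aj (i + 1) = {ω | (∀ k ≤ n, X k ω = f k) ∧ X (n + 1) ω = f n + 1} := by
            ext ω; simp [hAj, hA, hi]
          rw [heq, (hX.2.2 n f).1, ENNReal.toReal_mul,
            ENNReal.toReal_ofReal (by linarith)]
        have hci : c i = -1 := by simp only [hc]; push_cast; ring
        have hci1 : c (i + 1) = α i / (1 - α i) := by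
          simp only [hc, hS, Finset.sum_range_succ]
          push_cast; ring
        rw [hci, hci1, hP1, hP2]
        have hne : (1 : ℝ) - α i ≠ 0 := by linarith
        field_simp
        ring

end Aux

/-- `Y n = X n - n + ∑_{i < X n} α i / (1 - α i)` is a martingale with respect to the
natural filtration of `X`: each `Y n` is integrable and
`E[Y n | X 0, …, X (n-1)] = Y (n-1)` for `n ≥ 1`. -/
theorem stmt9 {Ω : Type*} [MeasurableSpace Ω] (P : Measure Ω) [IsProbabilityMeasure P]
    (α : ℕ → ℝ) (X : ℕ → Ω → ℕ) (hα : ∀ i, 0 ≤ α i ∧ α i < 1)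
    (hX : IsGrowthChain P X α)
    (Y : ℕ → Ω → ℝ)
    (hY : ∀ n ω, Y n ω
      = (X n ω : ℝ) - n + ∑ i ∈ Finset.range (X n ω), α i / (1 - α i)) :
    (∀ n, Integrable (Y n) P) ∧
      ∀ n : ℕ, 1 ≤ n →
        P[Y n | ⨆ k ∈ Finset.range n, MeasurableSpace.comap (X k) ⊤] =ᵐ[P] Y (n - 1) := by
  have hint := Y_integrable hα hX Y hY
  refine ⟨hint, ?_⟩
  rintro n hn
  obtain ⟨m, rfl⟩ : ∃ m, n = m + 1 := ⟨n - 1, by omega⟩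
  simp only [Nat.add_sub_cancel]
  have hnat : Nat.instMeasurableSpace = (⊤ : MeasurableSpace ℕ) := rfl
  have hm : (⨆ k ∈ Finset.range (m + 1), MeasurableSpace.comap (X k) ⊤)
      ≤ ‹MeasurableSpace Ω› := by
    refine iSup₂_le fun k _ => ?_
    rw [← hnat]
    exact (hX.1 k).comap_le
  -- the map collecting the first m+1 values
  set V : Ω → (Fin (m + 1) → ℕ) := fun ω k => X (k : ℕ) ω with hV
  have hVmeas : Measurable V := measurable_pi_lambda _ fun k => hX.1 (k : ℕ)
  have hVle : (⨆ k ∈ Finset.range (m + 1), MeasurableSpace.comap (X k) ⊤)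
      ≤ MeasurableSpace.comap V ⊤ := by
    refine iSup₂_le fun k hk => ?_
    have hk' : k < m + 1 := Finset.mem_range.mp hk
    have hXk : X k = (fun g : Fin (m + 1) → ℕ => g ⟨k, hk'⟩) ∘ V := rfl
    rw [hXk, ← MeasurableSpace.comap_comp]
    exact MeasurableSpace.comap_mono le_top
  have hD : Integrable (fun ω => Y (m + 1) ω - Y m ω) P :=
    (hint (m + 1)).sub (hint m)
  refine (ae_eq_condExp_of_forall_setIntegral_eq hm (hint (m + 1))
    (fun s _ _ => (hint m).integrableOn) ?_ ?_).symm
  · -- equal integrals on measurable sets of the natural filtration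
    intro s hs _
    obtain ⟨B, -, rfl⟩ := hVle _ hs
    have key : ∫ ω in V ⁻¹' B, (Y (m + 1) ω - Y m ω) ∂P = 0 := by
      set u : (Fin (m + 1) → ℕ) → Set Ω := fun b => V ⁻¹' (B ∩ {b}) with hu
      have humeas : ∀ b, MeasurableSet (u b) := by
        intro b
        by_cases hb : b ∈ B
        · have : B ∩ {b} = {b} := by
            ext x; simp only [Set.mem_inter_iff, Set.mem_singleton_iff]
            exact ⟨fun h => h.2, fun h => ⟨h ▸ hb, h⟩⟩
          rw [hu]; simp only [this]
          exact hVmeas (measurableSet_singleton b)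
        · have : B ∩ {b} = ∅ := by
            ext x; simp only [Set.mem_inter_iff, Set.mem_singleton_iff, Set.mem_empty_iff_false,
              iff_false, not_and]
            rintro hx rfl; exact hb hx
          rw [hu]; simp [this]
      have hdisj : Pairwise (Function.onFun Disjoint u) := by
        intro b b' hbb'
        refine Set.disjoint_left.2 fun ω hω hω' => hbb' ?_
        have h1 : V ω = b := hω.2
        have h2 : V ω = b' := hω'.2
        rw [← h1, h2]
      have hUnion : ⋃ b, u b = V ⁻¹' B := by
        ext ω; simp [hu]
      rw [← hUnion, integral_iUnion humeas hdisj (hUnion ▸ hD.integrableOn)]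
      have hz : ∀ b, ∫ ω in u b, (Y (m + 1) ω - Y m ω) ∂P = 0 := by
        intro b
        by_cases hb : b ∈ B
        · have hub : u b = {ω | ∀ k ≤ m, X k ω = padPath m b k} := by
            ext ω
            simp only [hu, Set.mem_preimage, Set.mem_inter_iff, Set.mem_singleton_iff,
              Set.mem_setOf_eq]
            constructor
            · rintro ⟨-, rfl⟩ k hk
              simp [padPath, hV, Nat.lt_succ_of_le hk]
            · intro h
              have hVb : V ω = b := by
                funext k
                have := h (k : ℕ) (Nat.lt_succ_iff.mp k.2)
                simpa [padPath, hV, k.2] using this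
              exact ⟨hVb ▸ hb, hVb⟩
          rw [hub]
          exact atom_integral hα hX Y hY m (padPath m b)
        · have : u b = ∅ := by
            rw [hu]
            have : B ∩ {b} = ∅ := by
              ext x; simp only [Set.mem_inter_iff, Set.mem_singleton_iff,
                Set.mem_empty_iff_false, iff_false, not_and]
              rintro hx rfl; exact hb hx
            simp [this]
          simp [this]
      simp only [hz, tsum_zero]
    have hsub := integral_sub ((hint (m + 1)).integrableOn (s := V ⁻¹' B))
      ((hint m).integrableOn (s := V ⁻¹' B))
    rw [hsub] at key
    linarith
  · -- Y m is measurable w.r.t. the natural filtration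
    have hXm : Measurable[⨆ k ∈ Finset.range (m + 1), MeasurableSpace.comap (X k) ⊤] (X m) := by
      rw [measurable_iff_comap_le, hnat]
      exact le_iSup₂ (f := fun k (_ : k ∈ Finset.range (m + 1)) =>
        MeasurableSpace.comap (X k) ⊤) m (Finset.self_mem_range_succ m)
    have hYm : Measurable[⨆ k ∈ Finset.range (m + 1), MeasurableSpace.comap (X k) ⊤] (Y m) := by
      have : Y m = (fun j : ℕ => (j : ℝ) - m + ∑ i ∈ Finset.range j, α i / (1 - α i)) ∘ X m :=
        funext fun ω => hY m ω
      rw [this]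
      exact (measurable_from_top).comp hXm
    exact StronglyMeasurable.aestronglyMeasurable hYm.stronglyMeasurable
end

section
/- (Martingale for the quantum-group chain.) If q ≠ 1, the process Y_n := X_n − n + (1 − q^{X_n})/(1 − q) is a martingale with respect to the natural filtration of (X_n): each Y_n is integrable and E[Y_n | X_0, ..., X_{n-1}] = Y_{n-1} for all n ≥ 1. -/
open MeasureTheory Filter Topology

/-- Extend a tuple `g : Fin (m+1) → ℕ` to a function `ℕ → ℕ` by zero. -/
def qext (m : ℕ) (g : Fin (m + 1) → ℕ) (k : ℕ) : ℕ :=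
  if h : k < m + 1 then g ⟨k, h⟩ else 0

lemma qext_eq (m : ℕ) (g : Fin (m + 1) → ℕ) {k : ℕ} (hk : k ≤ m) :
    qext m g k = g ⟨k, Nat.lt_succ_of_le hk⟩ := by
  simp [qext, Nat.lt_succ_of_le hk]

/-- `Y n = X n - n + (1 - q^(X n))/(1 - q)` is a martingale with respect to the
natural filtration of `X`. -/
theorem stmt10 {Ω : Type*} [MeasurableSpace Ω] (P : Measure Ω) [IsProbabilityMeasure P]
    (q : ℝ) (X : ℕ → Ω → ℕ) (hq : 0 < q) (hX : IsQChain P X q) (hq1 : q ≠ 1)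
    (Y : ℕ → Ω → ℝ)
    (hY : ∀ n ω, Y n ω = (X n ω : ℝ) - n + (1 - q ^ X n ω) / (1 - q)) :
    (∀ n, Integrable (Y n) P) ∧
      ∀ n : ℕ, 1 ≤ n →
        P[Y n | ⨆ k ∈ Finset.range n, MeasurableSpace.comap (X k) ⊤] =ᵐ[P] Y (n - 1) := by
  rename_i mΩ _
  obtain ⟨hXm, hX0, hT⟩ := hX
  have hq1' : (1 : ℝ) - q ≠ 0 := by
    intro h; apply hq1; linarith
  have hYcomp : ∀ n, Y n = (fun j : ℕ => (j : ℝ) - n + (1 - q ^ j) / (1 - q)) ∘ X n :=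
    fun n => funext fun ω => hY n ω
  have hYmeas : ∀ n, Measurable (Y n) := by
    intro n
    rw [hYcomp n]
    exact measurable_from_nat.comp (hXm n)
  -- a.e., each step goes up by 0 or 1
  have hstep : ∀ m : ℕ, ∀ᵐ ω ∂P, X (m + 1) ω = X m ω ∨ X (m + 1) ω = X m ω + 1 := by
    intro m
    rw [ae_iff]
    refine measure_mono_null (t := ⋃ (g : Fin (m + 1) → ℕ) (j : ℕ),
      {ω | ((∀ k ≤ m, X k ω = qext m g k) ∧ X (m + 1) ω = j) ∧
        j ≠ qext m g m ∧ j ≠ qext m g m + 1}) ?_ ?_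
    · intro ω hω
      simp only [Set.mem_setOf_eq, not_or] at hω
      refine Set.mem_iUnion.2 ⟨fun k => X k ω, Set.mem_iUnion.2 ⟨X (m + 1) ω, ?_⟩⟩
      have hF : ∀ k ≤ m, qext m (fun k : Fin (m + 1) => X k ω) k = X k ω := by
        intro k hk; rw [qext_eq m _ hk]
      exact ⟨⟨fun k hk => (hF k hk).symm, rfl⟩,
        by rw [hF m le_rfl]; exact hω.1, by rw [hF m le_rfl]; exact hω.2⟩
    · refine measure_iUnion_null fun g => measure_iUnion_null fun j => ?_
      by_cases h : j ≠ qext m g m ∧ j ≠ qext m g m + 1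
      · refine measure_mono_null (fun ω hω => hω.1) ?_
        exact (hT m (qext m g)).2.2 j h.1 h.2
      · refine measure_mono_null (fun ω hω => (h hω.2).elim) measure_empty
  have hboundAll : ∀ᵐ ω ∂P, ∀ n, X n ω ≤ n := by
    have h2 : ∀ᵐ ω ∂P, ∀ m, X (m + 1) ω = X m ω ∨ X (m + 1) ω = X m ω + 1 :=
      ae_all_iff.2 hstep
    filter_upwards [hX0, h2] with ω h0 hs
    intro n
    induction n with
    | zero => simp [h0]
    | succ k ih => rcases hs k with h | h <;> omega
  have hInt : ∀ n, Integrable (Y n) P := by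
    intro n
    refine Integrable.mono'
      (integrable_const ((Finset.range (n + 1)).sup'
        ⟨0, Finset.mem_range.2 (Nat.succ_pos n)⟩
        (fun j => |(j : ℝ) - n + (1 - q ^ j) / (1 - q)|)))
      (hYmeas n).aestronglyMeasurable ?_
    filter_upwards [hboundAll] with ω hb
    rw [hY n ω, Real.norm_eq_abs]
    apply Finset.le_sup' (f := fun j : ℕ => |(j : ℝ) - n + (1 - q ^ j) / (1 - q)|)
    exact Finset.mem_range.2 (Nat.lt_succ_of_le (hb n))
  refine ⟨hInt, ?_⟩
  intro n hn
  obtain ⟨m, rfl⟩ : ∃ m, n = m + 1 := ⟨n - 1, (Nat.succ_pred_eq_of_pos hn).symm⟩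
  simp only [Nat.add_sub_cancel]
  have hle : (⨆ k ∈ Finset.range (m + 1), MeasurableSpace.comap (X k) ⊤) ≤ mΩ := by
    refine iSup₂_le fun k _ => ?_
    rintro t ⟨u, -, rfl⟩
    exact hXm k trivial
  haveI : SigmaFinite (P.trim hle) := by
    have : IsFiniteMeasure (P.trim hle) := isFiniteMeasure_trim hle
    infer_instance
  set π : Ω → (Fin (m + 1) → ℕ) := fun ω k => X k ω with hπ
  have hGle : (⨆ k ∈ Finset.range (m + 1), MeasurableSpace.comap (X k) ⊤) ≤ MeasurableSpace.comap π ⊤ := by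
    refine iSup₂_le fun k hk => ?_
    have hk' : k < m + 1 := Finset.mem_range.1 hk
    have hc : X k = (fun g : Fin (m + 1) → ℕ => g ⟨k, hk'⟩) ∘ π := rfl
    rw [hc, ← MeasurableSpace.comap_comp]
    exact MeasurableSpace.comap_mono le_top
  set A : (Fin (m + 1) → ℕ) → Set Ω := fun g => {ω | ∀ k ≤ m, X k ω = qext m g k} with hA
  have hA_pre : ∀ g, A g = π ⁻¹' {g} := by
    intro g
    ext ω
    simp only [hA, Set.mem_setOf_eq, Set.mem_preimage, Set.mem_singleton_iff]
    constructor
    · intro h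
      funext k
      have h2 := h k (Nat.lt_succ_iff.1 k.isLt)
      rw [qext_eq m g (Nat.lt_succ_iff.1 k.isLt)] at h2
      simpa [hπ] using h2
    · intro h k hk
      rw [qext_eq m g hk]
      have h2 := congrFun h ⟨k, Nat.lt_succ_of_le hk⟩
      simpa [hπ] using h2
  have hAmeas : ∀ g : Fin (m + 1) → ℕ, MeasurableSet (A g) := by
    intro g
    have hr : A g = ⋂ (k : ℕ) (_ : k ≤ m), X k ⁻¹' {qext m g k} := by
      ext ω; simp [hA]
    rw [hr]
    exact MeasurableSet.iInter fun k => MeasurableSet.iInter fun _ =>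
      hXm k (measurableSet_singleton _)
  -- per-atom identity
  have hatom : ∀ f : ℕ → ℕ,
      ∫ ω in {ω | ∀ k ≤ m, X k ω = f k}, Y m ω ∂P
        = ∫ ω in {ω | ∀ k ≤ m, X k ω = f k}, Y (m + 1) ω ∂P := by
    intro f
    set i := f m with hi
    set Atom : Set Ω := {ω | ∀ k ≤ m, X k ω = f k} with hAtom
    have hAtomMeas : MeasurableSet Atom := by
      have hr : Atom = ⋂ (k : ℕ) (_ : k ≤ m), X k ⁻¹' {f k} := by ext ω; simp [hAtom]
      rw [hr]
      exact MeasurableSet.iInter fun k => MeasurableSet.iInter fun _ =>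
        hXm k (measurableSet_singleton _)
    set B0 : Set Ω := {ω | (∀ k ≤ m, X k ω = f k) ∧ X (m + 1) ω = i} with hB0
    set B1 : Set Ω := {ω | (∀ k ≤ m, X k ω = f k) ∧ X (m + 1) ω = i + 1} with hB1
    have hB0meas : MeasurableSet B0 := hAtomMeas.inter (hXm (m + 1) (measurableSet_singleton i))
    have hB1meas : MeasurableSet B1 :=
      hAtomMeas.inter (hXm (m + 1) (measurableSet_singleton (i + 1)))
    have hP1 : P B1 = ENNReal.ofReal (1 / (q ^ i + 1)) * P Atom := (hT m f).1
    have hP0 : P B0 = ENNReal.ofReal (q ^ i / (q ^ i + 1)) * P Atom := (hT m f).2.1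
    have hdpos : (0 : ℝ) < q ^ i + 1 := by positivity
    have hd0 : q ^ i + 1 ≠ 0 := ne_of_gt hdpos
    set c : ℝ := (i : ℝ) - m + (1 - q ^ i) / (1 - q) with hc
    have hIm : ∫ ω in Atom, Y m ω ∂P = c * (P Atom).toReal := by
      rw [setIntegral_congr_fun hAtomMeas (g := fun _ => c)
        (fun ω hω => by rw [hY m ω, hω m le_rfl])]
      rw [setIntegral_const, smul_eq_mul, mul_comm]
      rfl
    have hAe : Atom =ᵐ[P] (B0 ∪ B1 : Set Ω) := by
      have hsub : (B0 ∪ B1 : Set Ω) ⊆ Atom := by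
        rintro ω (h | h) <;> exact h.1
      have hnull : P (Atom \ (B0 ∪ B1)) = 0 := by
        refine measure_mono_null
          (t := {ω | ¬(X (m + 1) ω = X m ω ∨ X (m + 1) ω = X m ω + 1)})
          ?_ (ae_iff.1 (hstep m))
        rintro ω ⟨hω, hnot⟩
        simp only [Set.mem_setOf_eq, not_or]
        have hXi : X m ω = i := hω m le_rfl
        constructor
        · intro h; exact hnot (Or.inl ⟨hω, by rw [h, hXi]⟩)
        · intro h; exact hnot (Or.inr ⟨hω, by rw [h, hXi]⟩)
      exact (MeasureTheory.ae_eq_set.2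
        ⟨hnull, by rw [Set.diff_eq_empty.2 hsub]; exact measure_empty⟩)
    have hdisj01 : Disjoint B0 B1 := by
      refine Set.disjoint_left.2 fun ω h0 h1 => ?_
      have e0 := h0.2
      have e1 := h1.2
      omega
    have hsplit : ∫ ω in Atom, Y (m + 1) ω ∂P
        = ∫ ω in B0, Y (m + 1) ω ∂P + ∫ ω in B1, Y (m + 1) ω ∂P := by
      rw [setIntegral_congr_set hAe]
      exact setIntegral_union hdisj01 hB1meas ((hInt (m + 1)).integrableOn)
        ((hInt (m + 1)).integrableOn)
    have hI0 : ∫ ω in B0, Y (m + 1) ω ∂P = (c - 1) * (P B0).toReal := by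
      rw [setIntegral_congr_fun hB0meas (g := fun _ => c - 1) (fun ω hω => ?_),
        setIntegral_const, smul_eq_mul, mul_comm]
      rfl
      rw [hY (m + 1) ω, hω.2, hc]
      push_cast
      ring
    have hI1 : ∫ ω in B1, Y (m + 1) ω ∂P = (c + q ^ i) * (P B1).toReal := by
      rw [setIntegral_congr_fun hB1meas (g := fun _ => c + q ^ i) (fun ω hω => ?_),
        setIntegral_const, smul_eq_mul, mul_comm]
      rfl
      rw [hY (m + 1) ω, hω.2, hc]
      have hpow : (1 - q ^ (i + 1)) / (1 - q) = (1 - q ^ i) / (1 - q) + q ^ i := by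
        field_simp
        ring
      rw [hpow]
      push_cast
      ring
    have ht0 : (P B0).toReal = q ^ i / (q ^ i + 1) * (P Atom).toReal := by
      rw [hP0, ENNReal.toReal_mul, ENNReal.toReal_ofReal (by positivity)]
    have ht1 : (P B1).toReal = 1 / (q ^ i + 1) * (P Atom).toReal := by
      rw [hP1, ENNReal.toReal_mul, ENNReal.toReal_ofReal (by positivity)]
    rw [hIm, hsplit, hI0, hI1, ht0, ht1]
    field_simp
    ring
  refine (ae_eq_condExp_of_forall_setIntegral_eq hle (hInt (m + 1))
    (fun s _ _ => (hInt m).integrableOn)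
    (fun s hs _ => ?_) ?_).symm
  · obtain ⟨S, -, hS⟩ := MeasurableSpace.measurableSet_comap.1 (hGle s hs)
    have hs_eq : s = ⋃ g : S, A ↑g := by
      rw [← hS]
      ext ω
      simp only [Set.mem_preimage, Set.mem_iUnion]
      constructor
      · intro h
        exact ⟨⟨π ω, h⟩, by rw [hA_pre]; exact rfl⟩
      · rintro ⟨g, hg⟩
        rw [hA_pre] at hg
        exact Set.mem_of_eq_of_mem (hg : π ω = ↑g) g.2
    have hdisj : Pairwise (Function.onFun Disjoint fun g : S => A ↑g) := by
      intro g g' hne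
      simp only [Function.onFun]
      rw [hA_pre, hA_pre]
      refine Set.disjoint_left.2 fun ω h1 h2 => hne (Subtype.ext ?_)
      have e1 : π ω = ↑g := h1
      have e2 : π ω = ↑g' := h2
      rw [← e1, ← e2]
    rw [hs_eq,
      integral_iUnion (s := fun g : S => A ↑g) (fun g => hAmeas ↑g) hdisj
        ((hInt m).integrableOn),
      integral_iUnion (s := fun g : S => A ↑g) (fun g => hAmeas ↑g) hdisj
        ((hInt (m + 1)).integrableOn)]
    exact tsum_congr fun g => hatom (qext m ↑g)
  · have hXmG : Measurable[(⨆ k ∈ Finset.range (m + 1), MeasurableSpace.comap (X k) ⊤)] (X m) := by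
      rw [measurable_iff_comap_le]
      exact le_iSup₂ (f := fun (k : ℕ) (_ : k ∈ Finset.range (m + 1)) =>
        MeasurableSpace.comap (X k) ⊤) m (Finset.self_mem_range_succ m)
    have hsm : StronglyMeasurable[(⨆ k ∈ Finset.range (m + 1), MeasurableSpace.comap (X k) ⊤)] (Y m) := by
      rw [hYcomp m]
      exact (measurable_from_nat.comp hXmG).stronglyMeasurable
    exact hsm.aestronglyMeasurable
end

section
/- (General almost-sure upper bound.) Suppose 0 < α(i) < 1 for every i, and define h̃(x) := Σ_{i=0}^{x-1} α(i)/(1 − α(i)) for x ∈ ℕ. Then h̃ is strictly increasing on ℕ, and for every δ > 0, almost surely there exists N such that for all n ≥ N, h̃(X_n^α) ≤ n^{2+δ} (equivalently, X_n^α ≤ h̃^{-1}(n^{2+δ}) where h̃^{-1}(y) denotes the largest x ∈ ℕ with h̃(x) ≤ y). -/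
open MeasureTheory Filter Topology

set_option linter.unusedSectionVars false
set_option linter.unusedVariables false
set_option maxHeartbeats 1000000

section GC
variable {Ω : Type*} [MeasurableSpace Ω] (P : Measure Ω) [IsProbabilityMeasure P]
  (α : ℕ → ℝ) (X : ℕ → Ω → ℕ)

/-- path map -/
def Ypath (n : ℕ) : Ω → (Fin (n+1) → ℕ) := fun ω k => X k ω

/-- extend a finite path to ℕ → ℕ -/
def extp (n : ℕ) (g : Fin (n+1) → ℕ) : ℕ → ℕ := fun k => if h : k < n + 1 then g ⟨k, h⟩ else 0

lemma measY (hX : IsGrowthChain P X α) (n : ℕ) : Measurable (Ypath X n) :=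
  measurable_pi_lambda _ (fun k => hX.1 k)

lemma pathSet_eq (n : ℕ) (g : Fin (n+1) → ℕ) :
    {ω | ∀ k ≤ n, X k ω = extp n g k} = Ypath X n ⁻¹' {g} := by
  ext ω
  simp only [Set.mem_setOf_eq, Set.mem_preimage, Set.mem_singleton_iff, Ypath, extp]
  constructor
  · intro h
    funext k
    have := h k.1 (Nat.lt_succ_iff.mp k.2)
    rw [dif_pos k.2] at this
    exact this
  · intro h k hk
    subst h
    rw [dif_pos (Nat.lt_succ_of_le hk)]
    rfl

lemma extp_last (n : ℕ) (g : Fin (n+1) → ℕ) : extp n g n = g (Fin.last n) := by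
  simp [extp, Fin.last]

lemma decompP (hX : IsGrowthChain P X α) (n : ℕ) (A : Set Ω) (hA : MeasurableSet A) (S : Set (Fin (n+1) → ℕ)) :
    P (A ∩ Ypath X n ⁻¹' S) = ∑' g : S, P (A ∩ Ypath X n ⁻¹' {(g : Fin (n+1) → ℕ)}) := by
  rw [← measure_iUnion]
  · congr 1
    ext ω
    simp
  · intro g g' hgg'
    simp only [Function.onFun]
    apply Set.disjoint_left.mpr
    rintro ω ⟨-, h1⟩ ⟨-, h2⟩
    simp only [Set.mem_preimage, Set.mem_singleton_iff] at h1 h2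
    exact hgg' (Subtype.ext (h1 ▸ h2))
  · intro g
    exact hA.inter (measY P α X hX n (measurableSet_singleton _))

lemma setX_eq (n x : ℕ) :
    {ω | X n ω = x} = Set.univ ∩ Ypath X n ⁻¹' {g | g (Fin.last n) = x} := by
  ext ω
  simp [Ypath, Fin.last]

lemma measX (hX : IsGrowthChain P X α) (n x : ℕ) : MeasurableSet {ω | X n ω = x} :=
  hX.1 n (measurableSet_singleton x)

lemma inter_path (n j : ℕ) (g : Fin (n+1) → ℕ) :
    {ω | (∀ k ≤ n, X k ω = extp n g k) ∧ X (n+1) ω = j}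
      = {ω | X (n+1) ω = j} ∩ Ypath X n ⁻¹' {g} := by
  rw [← pathSet_eq]
  ext ω
  simp only [Set.mem_setOf_eq, Set.mem_inter_iff]
  tauto

lemma trans_succ (hX : IsGrowthChain P X α) (n x : ℕ) :
    P ({ω | X (n+1) ω = x + 1} ∩ {ω | X n ω = x})
      = ENNReal.ofReal (1 - α x) * P {ω | X n ω = x} := by
  have hset : {ω | X n ω = x} = Set.univ ∩ Ypath X n ⁻¹' {g | g (Fin.last n) = x} :=
    setX_eq X n x
  have h1 : {ω | X (n+1) ω = x + 1} ∩ {ω | X n ω = x}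
      = {ω | X (n+1) ω = x + 1} ∩ Ypath X n ⁻¹' {g | g (Fin.last n) = x} := by
    rw [hset]; ext ω; simp
  rw [h1, decompP P α X hX n _ (measX P α X hX (n+1) (x+1)),
    hset, decompP P α X hX n _ MeasurableSet.univ]
  rw [← ENNReal.tsum_mul_left]
  apply tsum_congr
  rintro ⟨g, hg⟩
  have key := (hX.2.2 n (extp n g)).1
  rw [extp_last, hg] at key
  rw [← inter_path, key, pathSet_eq, Set.univ_inter]

lemma trans_stay (hX : IsGrowthChain P X α) (n x : ℕ) :
    P ({ω | X (n+1) ω = x} ∩ {ω | X n ω = x})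
      = ENNReal.ofReal (α x) * P {ω | X n ω = x} := by
  have hset : {ω | X n ω = x} = Set.univ ∩ Ypath X n ⁻¹' {g | g (Fin.last n) = x} :=
    setX_eq X n x
  have h1 : {ω | X (n+1) ω = x} ∩ {ω | X n ω = x}
      = {ω | X (n+1) ω = x} ∩ Ypath X n ⁻¹' {g | g (Fin.last n) = x} := by
    rw [hset]; ext ω; simp
  rw [h1, decompP P α X hX n _ (measX P α X hX (n+1) x),
    hset, decompP P α X hX n _ MeasurableSet.univ]
  rw [← ENNReal.tsum_mul_left]
  apply tsum_congr
  rintro ⟨g, hg⟩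
  have key := (hX.2.2 n (extp n g)).2.1
  rw [extp_last, hg] at key
  rw [← inter_path, key, pathSet_eq, Set.univ_inter]

lemma bad_null (hX : IsGrowthChain P X α) (n : ℕ) :
    P {ω | X (n+1) ω ≠ X n ω ∧ X (n+1) ω ≠ X n ω + 1} = 0 := by
  refine measure_mono_null (t := ⋃ p : (Fin (n+1) → ℕ) × ℕ,
    {ω | ((∀ k ≤ n, X k ω = extp n p.1 k) ∧ X (n+1) ω = p.2)
      ∧ p.2 ≠ extp n p.1 n ∧ p.2 ≠ extp n p.1 n + 1}) ?_ ?_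
  · intro ω hω
    simp only [Set.mem_setOf_eq] at hω
    refine Set.mem_iUnion.mpr ⟨⟨Ypath X n ω, X (n+1) ω⟩, ?_⟩
    have hmem : ω ∈ Ypath X n ⁻¹' {Ypath X n ω} := rfl
    rw [← pathSet_eq] at hmem
    have hlast : extp n (Ypath X n ω) n = X n ω := by
      rw [extp_last]; rfl
    exact ⟨⟨hmem, rfl⟩, by rw [hlast]; exact hω.1, by rw [hlast]; exact hω.2⟩
  · apply measure_iUnion_null
    rintro ⟨g, j⟩
    by_cases hc : j ≠ extp n g n ∧ j ≠ extp n g n + 1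
    · exact measure_mono_null (fun ω hω => hω.1) ((hX.2.2 n (extp n g)).2.2 j hc.1 hc.2)
    · have : {ω | ((∀ k ≤ n, X k ω = extp n g k) ∧ X (n+1) ω = j)
          ∧ j ≠ extp n g n ∧ j ≠ extp n g n + 1} = ∅ := by
        ext ω; simp only [Set.mem_setOf_eq, Set.mem_empty_iff_false, iff_false]
        intro h; exact hc h.2
      rw [this, measure_empty]


lemma ae_le (hX : IsGrowthChain P X α) : ∀ᵐ ω ∂P, ∀ n, X n ω ≤ n := by
  have h0 := hX.2.1
  have hb : ∀ᵐ ω ∂P, ∀ n, ¬(X (n+1) ω ≠ X n ω ∧ X (n+1) ω ≠ X n ω + 1) := by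
    rw [ae_all_iff]
    intro n
    have := bad_null P α X hX n
    rw [← compl_compl {ω | X (n+1) ω ≠ X n ω ∧ X (n+1) ω ≠ X n ω + 1}] at this
    exact (ae_iff).mpr (by simpa using this)
  filter_upwards [h0, hb] with ω h0ω hbω
  intro n
  induction n with
  | zero => omega
  | succ n ih =>
    have := hbω n
    push_neg at this
    by_cases hc : X (n+1) ω = X n ω
    · omega
    · have := this hc; omega

lemma q_succ (hX : IsGrowthChain P X α) (n x : ℕ) :
    P {ω | X (n+1) ω = x + 1}
      = ENNReal.ofReal (α (x+1)) * P {ω | X n ω = x+1}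
        + ENNReal.ofReal (1 - α x) * P {ω | X n ω = x} := by
  set U1 := {ω | X (n+1) ω = x+1} ∩ {ω | X n ω = x+1} with hU1
  set U2 := {ω | X (n+1) ω = x+1} ∩ {ω | X n ω = x} with hU2
  set B := {ω | X (n+1) ω ≠ X n ω ∧ X (n+1) ω ≠ X n ω + 1} with hB
  have hPB : P B = 0 := bad_null P α X hX n
  have hkey : P {ω | X (n+1) ω = x + 1} = P (U1 ∪ U2) := by
    apply le_antisymm
    · calc P {ω | X (n+1) ω = x + 1} ≤ P ((U1 ∪ U2) ∪ B) := by
            apply measure_mono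
            intro ω hω
            by_cases hc : ω ∈ B
            · exact Or.inr hc
            · simp only [hB, Set.mem_setOf_eq, not_and, not_not] at hc
              simp only [Set.mem_setOf_eq] at hω
              left
              by_cases h1 : X (n+1) ω = X n ω
              · exact Or.inl ⟨hω, show X n ω = x + 1 by omega⟩
              · have h2 := hc h1
                exact Or.inr ⟨hω, show X n ω = x by omega⟩
        _ ≤ P (U1 ∪ U2) + P B := measure_union_le _ _
        _ = P (U1 ∪ U2) := by rw [hPB, add_zero]
    · exact measure_mono (by rintro ω (⟨h, -⟩ | ⟨h, -⟩) <;> exact h)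
  rw [hkey, measure_union ?_ ((measX P α X hX (n+1) (x+1)).inter (measX P α X hX n x)),
    trans_succ P α X hX n x, trans_stay P α X hX n (x+1)]
  apply Set.disjoint_left.mpr
  rintro ω ⟨-, h1⟩ ⟨-, h2⟩
  simp only [Set.mem_setOf_eq] at h1 h2
  omega

lemma q_zero_succ (hX : IsGrowthChain P X α) (n : ℕ) :
    P {ω | X (n+1) ω = 0} = ENNReal.ofReal (α 0) * P {ω | X n ω = 0} := by
  set U1 := {ω | X (n+1) ω = 0} ∩ {ω | X n ω = 0} with hU1
  set B := {ω | X (n+1) ω ≠ X n ω ∧ X (n+1) ω ≠ X n ω + 1} with hB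
  have hPB : P B = 0 := bad_null P α X hX n
  have hkey : P {ω | X (n+1) ω = 0} = P U1 := by
    apply le_antisymm
    · calc P {ω | X (n+1) ω = 0} ≤ P (U1 ∪ B) := by
            apply measure_mono
            intro ω hω
            by_cases hc : ω ∈ B
            · exact Or.inr hc
            · simp only [hB, Set.mem_setOf_eq, not_and, not_not] at hc
              simp only [Set.mem_setOf_eq] at hω
              left
              by_cases h1 : X (n+1) ω = X n ω
              · exact ⟨hω, show X n ω = 0 by omega⟩
              · have h2 := hc h1; exact ⟨hω, show X n ω = 0 by omega⟩
        _ ≤ P U1 + P B := measure_union_le _ _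
        _ = P U1 := by rw [hPB, add_zero]
    · exact measure_mono (fun ω h => h.1)
  rw [hkey]
  exact trans_stay P α X hX n 0

lemma q_gt_zero (hX : IsGrowthChain P X α) (n x : ℕ) (hx : n < x) :
    P {ω | X n ω = x} = 0 := by
  have h := ae_le P α X hX
  rw [ae_iff] at h
  apply measure_mono_null _ h
  intro ω hω
  simp only [Set.mem_setOf_eq] at hω ⊢
  push_neg
  exact ⟨n, by omega⟩


noncomputable def qr (n x : ℕ) : ℝ := (P {ω | X n ω = x}).toReal

noncomputable def ht (x : ℕ) : ℝ := ∑ i ∈ Finset.range x, α i / (1 - α i)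

noncomputable def EE (n : ℕ) : ℝ := ∑ x ∈ Finset.range (n+1), ht α x * qr P X n x

variable (hα : ∀ i, 0 ≤ α i ∧ α i < 1)

lemma qr_nonneg (n x : ℕ) : 0 ≤ qr P X n x := ENNReal.toReal_nonneg

lemma ht_nonneg (hα : ∀ i, 0 ≤ α i ∧ α i < 1) (x : ℕ) : 0 ≤ ht α x := by
  apply Finset.sum_nonneg
  intro i _
  have h := hα i
  have h1 : 0 < 1 - α i := by linarith [h.2]
  exact div_nonneg h.1 h1.le

lemma ht_succ (x : ℕ) : ht α (x+1) = ht α x + α x / (1 - α x) :=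
  Finset.sum_range_succ _ x

lemma qr_succ (hα : ∀ i, 0 ≤ α i ∧ α i < 1) (hX : IsGrowthChain P X α) (n x : ℕ) :
    qr P X (n+1) (x+1) = α (x+1) * qr P X n (x+1) + (1 - α x) * qr P X n x := by
  unfold qr
  rw [q_succ P α X hX n x, ENNReal.toReal_add, ENNReal.toReal_mul, ENNReal.toReal_mul,
    ENNReal.toReal_ofReal (hα (x+1)).1, ENNReal.toReal_ofReal (by linarith [(hα x).2])]
  · exact ENNReal.mul_ne_top ENNReal.ofReal_ne_top (measure_ne_top P _)
  · exact ENNReal.mul_ne_top ENNReal.ofReal_ne_top (measure_ne_top P _)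

lemma qr_zero_succ (hα : ∀ i, 0 ≤ α i ∧ α i < 1) (hX : IsGrowthChain P X α) (n : ℕ) :
    qr P X (n+1) 0 = α 0 * qr P X n 0 := by
  unfold qr
  rw [q_zero_succ P α X hX n, ENNReal.toReal_mul, ENNReal.toReal_ofReal (hα 0).1]

lemma qr_gt (hX : IsGrowthChain P X α) (n x : ℕ) (h : n < x) : qr P X n x = 0 := by
  unfold qr
  rw [q_gt_zero P α X hX n x h, ENNReal.toReal_zero]

lemma sum_q_le_one (hX : IsGrowthChain P X α) (n m : ℕ) :
    ∑ x ∈ Finset.range m, P {ω | X n ω = x} ≤ 1 := by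
  rw [← measure_biUnion_finset]
  · have := prob_le_one (μ := P) (s := ⋃ x ∈ Finset.range m, {ω | X n ω = x})
    exact this
  · intro x _ y _ hxy
    apply Set.disjoint_left.mpr
    intro ω h1 h2
    simp only [Set.mem_setOf_eq] at h1 h2
    exact hxy (h1 ▸ h2)
  · intro x _
    exact measX P α X hX n x

lemma sum_qr_le_one (hX : IsGrowthChain P X α) (n m : ℕ) :
    ∑ x ∈ Finset.range m, qr P X n x ≤ 1 := by
  unfold qr
  rw [← ENNReal.toReal_sum (fun x _ => measure_ne_top P _)]
  calc (∑ x ∈ Finset.range m, P {ω | X n ω = x}).toReal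
      ≤ (1 : ENNReal).toReal := by
        apply ENNReal.toReal_mono ENNReal.one_ne_top (sum_q_le_one P α X hX n m)
    _ = 1 := by simp

lemma EE_succ_le (hα : ∀ i, 0 ≤ α i ∧ α i < 1) (hX : IsGrowthChain P X α) (n : ℕ) :
    EE P α X (n+1) ≤ EE P α X n + 1 := by
  have key : EE P α X (n+1) = ∑ x ∈ Finset.range (n+1), (ht α x + α x) * qr P X n x := by
    unfold EE
    rw [Finset.sum_range_succ']
    have h1 : ∀ x ∈ Finset.range (n+1),
        ht α (x+1) * qr P X (n+1) (x+1)
          = ht α (x+1) * (α (x+1) * qr P X n (x+1)) + (ht α x * (1 - α x) + α x) * qr P X n x := by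
      intro x _
      rw [qr_succ P α X hα hX n x, ht_succ]
      have hne : (1 : ℝ) - α x ≠ 0 := by linarith [(hα x).2]
      field_simp
    rw [Finset.sum_congr rfl h1, Finset.sum_add_distrib]
    have h2 : ∑ x ∈ Finset.range (n+1), ht α (x+1) * (α (x+1) * qr P X n (x+1))
        + ht α 0 * qr P X (n+1) 0
        = ∑ x ∈ Finset.range (n+1), ht α x * (α x * qr P X n x) := by
      rw [qr_zero_succ P α X hα hX n]
      have := (Finset.sum_range_succ' (fun x => ht α x * (α x * qr P X n x)) (n+1)).symm
      calc ∑ x ∈ Finset.range (n+1), ht α (x+1) * (α (x+1) * qr P X n (x+1))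
          + ht α 0 * (α 0 * qr P X n 0)
          = ∑ x ∈ Finset.range (n+2), ht α x * (α x * qr P X n x) := this
        _ = ∑ x ∈ Finset.range (n+1), ht α x * (α x * qr P X n x)
            + ht α (n+1) * (α (n+1) * qr P X n (n+1)) := Finset.sum_range_succ _ _
        _ = ∑ x ∈ Finset.range (n+1), ht α x * (α x * qr P X n x) := by
            rw [qr_gt P α X hX n (n+1) (by omega)]; ring
    rw [add_right_comm, h2, ← Finset.sum_add_distrib]
    apply Finset.sum_congr rfl
    intro x _
    ring
  rw [key]
  have : ∑ x ∈ Finset.range (n+1), (ht α x + α x) * qr P X n x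
      = EE P α X n + ∑ x ∈ Finset.range (n+1), α x * qr P X n x := by
    unfold EE
    rw [← Finset.sum_add_distrib]
    apply Finset.sum_congr rfl
    intro x _
    ring
  rw [this]
  have hle : ∑ x ∈ Finset.range (n+1), α x * qr P X n x
      ≤ ∑ x ∈ Finset.range (n+1), qr P X n x := by
    apply Finset.sum_le_sum
    intro x _
    nlinarith [(hα x).1, (hα x).2, qr_nonneg P X n x]
  linarith [sum_qr_le_one P α X hX n (n+1)]

lemma EE_zero (hX : IsGrowthChain P X α) : EE P α X 0 = 0 := by
  unfold EE ht
  simp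

lemma EE_le (hα : ∀ i, 0 ≤ α i ∧ α i < 1) (hX : IsGrowthChain P X α) (n : ℕ) :
    EE P α X n ≤ n := by
  induction n with
  | zero => rw [EE_zero P α X hX]; simp
  | succ n ih =>
    have := EE_succ_le P α X hα hX n
    push_cast
    linarith


lemma markov (hα : ∀ i, 0 ≤ α i ∧ α i < 1) (hX : IsGrowthChain P X α)
    (n : ℕ) (c : ℝ) (hc : 0 < c) :
    P {ω | c < ht α (X n ω)} ≤ ENNReal.ofReal ((n : ℝ) / c) := by
  set F := (Finset.range (n+1)).filter (fun x => c < ht α x) with hF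
  have hnull : P {ω | ¬ ∀ m, X m ω ≤ m} = 0 := by
    have := ae_le P α X hX
    rwa [ae_iff] at this
  have hsub : {ω | c < ht α (X n ω)}
      ⊆ (⋃ x ∈ F, {ω | X n ω = x}) ∪ {ω | ¬ ∀ m, X m ω ≤ m} := by
    intro ω hω
    by_cases hb : ∀ m, X m ω ≤ m
    · left
      refine Set.mem_biUnion (show X n ω ∈ F from ?_) rfl
      rw [hF, Finset.mem_filter, Finset.mem_range]
      exact ⟨Nat.lt_succ_of_le (hb n), hω⟩
    · right; exact hb
  have hdisj : P (⋃ x ∈ F, {ω | X n ω = x}) = ∑ x ∈ F, P {ω | X n ω = x} := by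
    apply measure_biUnion_finset
    · intro x _ y _ hxy
      apply Set.disjoint_left.mpr
      intro ω h1 h2
      simp only [Set.mem_setOf_eq] at h1 h2
      exact hxy (h1 ▸ h2)
    · intro x _
      exact measX P α X hX n x
  have hsum : ∑ x ∈ F, P {ω | X n ω = x} ≤ ENNReal.ofReal ((n : ℝ) / c) := by
    have heq : ∑ x ∈ F, P {ω | X n ω = x} = ENNReal.ofReal (∑ x ∈ F, qr P X n x) := by
      rw [ENNReal.ofReal_sum_of_nonneg (fun x _ => qr_nonneg P X n x)]
      apply Finset.sum_congr rfl
      intro x _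
      exact (ENNReal.ofReal_toReal (measure_ne_top P _)).symm
    rw [heq]
    apply ENNReal.ofReal_le_ofReal
    have step1 : ∑ x ∈ F, qr P X n x ≤ ∑ x ∈ F, (ht α x / c) * qr P X n x := by
      apply Finset.sum_le_sum
      intro x hx
      rw [hF, Finset.mem_filter] at hx
      have h1 : (1 : ℝ) ≤ ht α x / c := (one_le_div hc).mpr hx.2.le
      nlinarith [qr_nonneg P X n x]
    have step2 : ∑ x ∈ F, (ht α x / c) * qr P X n x
        ≤ ∑ x ∈ Finset.range (n+1), (ht α x / c) * qr P X n x := by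
      apply Finset.sum_le_sum_of_subset_of_nonneg (Finset.filter_subset _ _)
      intro x _ _
      have := ht_nonneg α hα x
      have := qr_nonneg P X n x
      positivity
    have step3 : ∑ x ∈ Finset.range (n+1), (ht α x / c) * qr P X n x = EE P α X n / c := by
      unfold EE
      rw [Finset.sum_div]
      apply Finset.sum_congr rfl
      intro x _
      ring
    have step4 : EE P α X n / c ≤ (n : ℝ) / c := by
      gcongr
      exact EE_le P α X hα hX n
    linarith
  calc P {ω | c < ht α (X n ω)}
      ≤ P ((⋃ x ∈ F, {ω | X n ω = x}) ∪ {ω | ¬ ∀ m, X m ω ≤ m}) := measure_mono hsub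
    _ ≤ P (⋃ x ∈ F, {ω | X n ω = x}) + P {ω | ¬ ∀ m, X m ω ≤ m} := measure_union_le _ _
    _ = ∑ x ∈ F, P {ω | X n ω = x} := by rw [hnull, hdisj, add_zero]
    _ ≤ ENNReal.ofReal ((n : ℝ) / c) := hsum

end GC

/-- General almost-sure upper bound: `h̃` is strictly increasing and
`h̃ (X n) ≤ n ^ (2 + δ)` eventually, almost surely. -/
theorem stmt12 {Ω : Type*} [MeasurableSpace Ω] (P : Measure Ω) [IsProbabilityMeasure P]
    (α : ℕ → ℝ) (X : ℕ → Ω → ℕ) (hα : ∀ i, 0 ≤ α i ∧ α i < 1)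
    (hX : IsGrowthChain P X α) (hα0 : ∀ i, 0 < α i) :
    StrictMono (fun x : ℕ => ∑ i ∈ Finset.range x, α i / (1 - α i)) ∧
      ∀ δ : ℝ, 0 < δ → ∀ᵐ ω ∂P, ∃ N : ℕ, ∀ n : ℕ, N ≤ n →
        (∑ i ∈ Finset.range (X n ω), α i / (1 - α i)) ≤ (n : ℝ) ^ (2 + δ) := by
  constructor
  · apply strictMono_nat_of_lt_succ
    intro x
    have h1 : 0 < α x / (1 - α x) := div_pos (hα0 x) (by linarith [(hα x).2])
    simp only [Finset.sum_range_succ]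
    linarith
  · intro δ hδ
    set s : ℕ → Set Ω := fun n => {ω | (n : ℝ) ^ (2 + δ) < ht α (X n ω)} with hs
    have hbound : ∀ n, P (s n) ≤ ENNReal.ofReal ((n : ℝ) ^ (-(1 + δ))) := by
      intro n
      rcases Nat.eq_zero_or_pos n with h0 | hpos
      · subst h0
        have hzero : P (s 0) = 0 := by
          have h00 := hX.2.1
          rw [ae_iff] at h00
          apply measure_mono_null _ h00
          intro ω hω
          simp only [hs, Set.mem_setOf_eq] at hω ⊢
          intro hX0
          rw [hX0] at hω
          have hz : ((0 : ℕ) : ℝ) ^ (2 + δ) = 0 := by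
            rw [Nat.cast_zero, Real.zero_rpow (by linarith)]
          rw [hz] at hω
          unfold ht at hω
          simp at hω
        rw [hzero]; exact zero_le
      · have hn : (0 : ℝ) < (n : ℝ) := by exact_mod_cast hpos
        have hc : (0 : ℝ) < (n : ℝ) ^ (2 + δ) := Real.rpow_pos_of_pos hn _
        refine le_trans (markov P α X hα hX n _ hc) (le_of_eq ?_)
        congr 1
        have hx := Real.rpow_sub hn 1 (2 + δ)
        rw [Real.rpow_one] at hx
        rw [show -(1 + δ) = 1 - (2 + δ) by ring, hx]
    have htsum : ∑' n, P (s n) ≠ ⊤ := by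
      have hsummable : Summable (fun n : ℕ => (n : ℝ) ^ (-(1 + δ))) :=
        Real.summable_nat_rpow.mpr (by linarith)
      have heq := ENNReal.ofReal_tsum_of_nonneg
        (fun n : ℕ => Real.rpow_nonneg (Nat.cast_nonneg n) (-(1 + δ))) hsummable
      have hlt : ∑' n, P (s n) < ⊤ := by
        calc ∑' n, P (s n) ≤ ∑' n : ℕ, ENNReal.ofReal ((n : ℝ) ^ (-(1 + δ))) :=
              ENNReal.tsum_le_tsum hbound
          _ = ENNReal.ofReal (∑' n : ℕ, (n : ℝ) ^ (-(1 + δ))) := heq.symm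
          _ < ⊤ := ENNReal.ofReal_lt_top
      exact hlt.ne
    have hae := MeasureTheory.ae_eventually_notMem htsum
    filter_upwards [hae] with ω hω
    rw [Filter.eventually_atTop] at hω
    obtain ⟨N, hN⟩ := hω
    refine ⟨N, fun n hn => ?_⟩
    have hnot := hN n hn
    simp only [hs, Set.mem_setOf_eq] at hnot
    exact not_lt.mp hnot
end

section
/- (Linear bound on the expected exponential functional.) If q ≠ 1, then for every n ≥ 0, E[(q^{X_n} − 1)/(q − 1)] ≤ n. -/
open MeasureTheory Filter Topology
open scoped ENNReal NNReal

namespace Stmt14Aux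

variable {Ω : Type*} [MeasurableSpace Ω]

/-- path event -/
def pev (X : ℕ → Ω → ℕ) (n : ℕ) (v : Fin (n + 1) → ℕ) : Set Ω :=
  {ω | ∀ k : Fin (n + 1), X k ω = v k}

lemma pev_meas (X : ℕ → Ω → ℕ) (hm : ∀ n, Measurable (X n)) (n : ℕ)
    (v : Fin (n + 1) → ℕ) : MeasurableSet (pev X n v) := by
  have h : pev X n v = ⋂ k : Fin (n + 1), X k ⁻¹' {v k} := by
    ext ω; simp [pev, Set.mem_iInter]
  rw [h]
  exact MeasurableSet.iInter fun k => (hm k) (measurableSet_singleton _)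

lemma pev_disj (X : ℕ → Ω → ℕ) (n : ℕ) :
    Pairwise (Function.onFun Disjoint (pev X n)) := by
  intro v w hvw
  rw [Function.onFun, Set.disjoint_left]
  intro ω hv hw
  exact hvw (funext fun k => (hv k).symm.trans (hw k))

lemma pev_cover (X : ℕ → Ω → ℕ) (n : ℕ) : ⋃ v, pev X n v = Set.univ := by
  ext ω
  simp only [Set.mem_iUnion, Set.mem_univ, iff_true]
  exact ⟨fun k => X k ω, fun k => rfl⟩

lemma lintegral_comp_eq (P : Measure Ω) (X : ℕ → Ω → ℕ)
    (hm : ∀ n, Measurable (X n)) (f : ℕ → ℝ≥0∞) (n : ℕ) :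
    ∫⁻ ω, f (X n ω) ∂P
      = ∑' v : Fin (n + 1) → ℕ, f (v (Fin.last n)) * P (pev X n v) := by
  rw [← setLIntegral_univ, ← pev_cover X n,
    lintegral_iUnion (pev_meas X hm n) (pev_disj X n)]
  refine tsum_congr fun v => ?_
  rw [setLIntegral_congr_fun (pev_meas X hm n v)
      (fun ω hω => ?_), setLIntegral_const]
  have h := hω (Fin.last n)
  simp only [Fin.val_last] at h
  rw [h]

lemma tsum_pev_eq_one (P : Measure Ω) [IsProbabilityMeasure P] (X : ℕ → Ω → ℕ)
    (hm : ∀ n, Measurable (X n)) (n : ℕ) :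
    ∑' v : Fin (n + 1) → ℕ, P (pev X n v) = 1 := by
  rw [← measure_iUnion (pev_disj X n) (pev_meas X hm n), pev_cover, measure_univ]

end Stmt14Aux

open Stmt14Aux

/-- Linear bound on the expected exponential functional. -/
theorem stmt14 {Ω : Type*} [MeasurableSpace Ω] (P : Measure Ω) [IsProbabilityMeasure P]
    (q : ℝ) (X : ℕ → Ω → ℕ) (hq : 0 < q) (hX : IsQChain P X q) (hq1 : q ≠ 1) (n : ℕ) :
    ∫ ω, (q ^ X n ω - 1) / (q - 1) ∂P ≤ n := by
  obtain ⟨hm, h0, htr⟩ := hX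
  set φ : ℕ → ℝ := fun i => (q ^ i - 1) / (q - 1) with hφdef
  have hφ : ∀ m : ℕ, φ m = ∑ k ∈ Finset.range m, q ^ k :=
    fun m => (geom_sum_eq hq1 m).symm
  have hφ0 : ∀ m : ℕ, 0 ≤ φ m := by
    intro m; rw [hφ]; positivity
  set g : ℕ → ℝ≥0∞ := fun i => ENNReal.ofReal (φ i) with hgdef
  -- per-path one-step inequality
  have key : ∀ (m : ℕ) (v : Fin (m + 1) → ℕ),
      (∑' j : ℕ, g j * P (pev X m v ∩ {ω | X (m + 1) ω = j}))
        ≤ (g (v (Fin.last m)) + 1) * P (pev X m v) := by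
    intro m v
    set i := v (Fin.last m) with hi
    set f0 : ℕ → ℕ := fun k => if h : k < m + 1 then v ⟨k, h⟩ else 0 with hf0def
    have hf0k : ∀ k : Fin (m + 1), f0 k.val = v k := by
      intro k
      simp only [hf0def]
      rw [dif_pos k.isLt]
    have hf0 : {ω | ∀ k ≤ m, X k ω = f0 k} = pev X m v := by
      ext ω
      constructor
      · intro h k
        exact (h k.val (by omega)).trans (hf0k k)
      · intro h k hk
        have h2 := h ⟨k, by omega⟩
        have h3 : f0 k = v ⟨k, by omega⟩ := by
          simp only [hf0def]
          rw [dif_pos (by omega : k < m + 1)]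
        rw [h3]
        exact h2
    have hf0m : f0 m = i := hf0k (Fin.last m)
    obtain ⟨h1, h2, h3⟩ := htr m f0
    have hset : ∀ j : ℕ, {ω | (∀ k ≤ m, X k ω = f0 k) ∧ X (m + 1) ω = j}
        = pev X m v ∩ {ω | X (m + 1) ω = j} := by
      intro j
      rw [← hf0]; rfl
    rw [hset, hf0m] at h1 h2
    simp only [hset] at h3
    rw [hf0] at h1 h2
    have htsum : (∑' j : ℕ, g j * P (pev X m v ∩ {ω | X (m + 1) ω = j}))
        = ∑ j ∈ ({i, i + 1} : Finset ℕ), g j * P (pev X m v ∩ {ω | X (m + 1) ω = j}) := by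
      refine tsum_eq_sum fun j hj => ?_
      simp only [Finset.mem_insert, Finset.mem_singleton, not_or] at hj
      rw [hf0m] at h3
      rw [h3 j hj.1 hj.2, mul_zero]
    rw [htsum, Finset.sum_pair (by omega : i ≠ i + 1), h1, h2]
    set mM := P (pev X m v) with hmM
    have hd : (0 : ℝ) < q ^ i + 1 := by positivity
    have hcore : g i * ENNReal.ofReal (q ^ i / (q ^ i + 1))
        + g (i + 1) * ENNReal.ofReal (1 / (q ^ i + 1)) ≤ g i + 1 := by
      rw [hgdef]
      simp only
      rw [← ENNReal.ofReal_mul (hφ0 i), ← ENNReal.ofReal_mul (hφ0 (i + 1)),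
        ← ENNReal.ofReal_add (mul_nonneg (hφ0 i) (by positivity)) (mul_nonneg (hφ0 (i + 1)) (by positivity)), ← ENNReal.ofReal_one,
        ← ENNReal.ofReal_add (hφ0 i) zero_le_one]
      refine ENNReal.ofReal_le_ofReal ?_
      have hstep : φ (i + 1) = φ i + q ^ i := by
        rw [hφ, hφ, Finset.sum_range_succ]
      rw [hstep]
      have heq : φ i * (q ^ i / (q ^ i + 1)) + (φ i + q ^ i) * (1 / (q ^ i + 1))
          = φ i + q ^ i / (q ^ i + 1) := by
        field_simp; ring
      rw [heq]
      have : q ^ i / (q ^ i + 1) ≤ 1 := by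
        rw [div_le_one hd]; linarith
      linarith
    calc g i * (ENNReal.ofReal (q ^ i / (q ^ i + 1)) * mM)
          + g (i + 1) * (ENNReal.ofReal (1 / (q ^ i + 1)) * mM)
        = (g i * ENNReal.ofReal (q ^ i / (q ^ i + 1))
            + g (i + 1) * ENNReal.ofReal (1 / (q ^ i + 1))) * mM := by ring
      _ ≤ (g i + 1) * mM := mul_le_mul_left hcore mM
  -- induction: ∫⁻ g (X n) ≤ n
  have hb : ∀ m : ℕ, ∫⁻ ω, g (X m ω) ∂P ≤ (m : ℝ≥0∞) := by
    intro m
    induction m with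
    | zero =>
      have hz : ∀ᵐ ω ∂P, g (X 0 ω) = 0 := by
        filter_upwards [h0] with ω hω
        rw [hω, hgdef]
        simp [hφdef]
      rw [lintegral_congr_ae hz, lintegral_zero]
      simp
    | succ m ih =>
      have hE : ∫⁻ ω, g (X (m + 1) ω) ∂P ≤ ∫⁻ ω, g (X m ω) ∂P + 1 := by
        rw [lintegral_comp_eq P X hm g (m + 1), lintegral_comp_eq P X hm g m]
        set e := Fin.snocEquiv (fun _ : Fin (m + 2) => ℕ) with hedef
        have hre : (∑' w : Fin (m + 2) → ℕ, g (w (Fin.last (m + 1))) * P (pev X (m + 1) w))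
            = ∑' p : ℕ × (Fin (m + 1) → ℕ),
                g ((e p) (Fin.last (m + 1))) * P (pev X (m + 1) (e p)) :=
          (Equiv.tsum_eq e _).symm
        rw [hre, ENNReal.tsum_prod', ENNReal.tsum_comm]
        have hept : ∀ (j : ℕ) (v : Fin (m + 1) → ℕ),
            (e (j, v)) (Fin.last (m + 1)) = j := by
          intro j v
          rw [hedef]
          simp [Fin.snocEquiv, Fin.snoc_last]
        have hecs : ∀ (j : ℕ) (v : Fin (m + 1) → ℕ) (k : Fin (m + 1)),
            (e (j, v)) (Fin.castSucc k) = v k := by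
          intro j v k
          rw [hedef]
          simp [Fin.snocEquiv, Fin.snoc_castSucc]
        have hpev : ∀ (j : ℕ) (v : Fin (m + 1) → ℕ),
            pev X (m + 1) (e (j, v)) = pev X m v ∩ {ω | X (m + 1) ω = j} := by
          intro j v
          ext ω
          simp only [pev, Set.mem_setOf_eq, Set.mem_inter_iff]
          constructor
          · intro h
            refine ⟨fun k => ?_, ?_⟩
            · have := h (Fin.castSucc k)
              rw [hecs j v k] at this
              simpa using this
            · have := h (Fin.last (m + 1))
              rw [hept j v] at this
              simpa using this
          · intro ⟨h1, h2⟩ k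
            refine Fin.lastCases ?_ (fun k' => ?_) k
            · rw [hept j v]; simpa using h2
            · rw [hecs j v k']
              simpa using h1 k'
        calc (∑' (v : Fin (m + 1) → ℕ) (j : ℕ),
                g ((e (j, v)) (Fin.last (m + 1))) * P (pev X (m + 1) (e (j, v))))
            = ∑' (v : Fin (m + 1) → ℕ) (j : ℕ),
                g j * P (pev X m v ∩ {ω | X (m + 1) ω = j}) := by
              refine tsum_congr fun v => tsum_congr fun j => ?_
              rw [hept j v, hpev j v]
          _ ≤ ∑' v : Fin (m + 1) → ℕ, (g (v (Fin.last m)) + 1) * P (pev X m v) :=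
              ENNReal.tsum_le_tsum fun v => key m v
          _ = (∑' v : Fin (m + 1) → ℕ, g (v (Fin.last m)) * P (pev X m v)) + 1 := by
              have : ∀ v : Fin (m + 1) → ℕ, (g (v (Fin.last m)) + 1) * P (pev X m v)
                  = g (v (Fin.last m)) * P (pev X m v) + P (pev X m v) := by
                intro v; rw [add_mul, one_mul]
              rw [tsum_congr this, ENNReal.tsum_add, tsum_pev_eq_one P X hm m]
      calc ∫⁻ ω, g (X (m + 1) ω) ∂P ≤ ∫⁻ ω, g (X m ω) ∂P + 1 := hE
        _ ≤ (m : ℝ≥0∞) + 1 := add_le_add_left ih 1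
        _ = ((m + 1 : ℕ) : ℝ≥0∞) := by push_cast; ring
  -- convert to Bochner integral
  have hnn : 0 ≤ᵐ[P] fun ω => (q ^ X n ω - 1) / (q - 1) := ae_of_all _ fun ω => hφ0 _
  have hmeas : AEStronglyMeasurable (fun ω => (q ^ X n ω - 1) / (q - 1)) P := by
    have : Measurable fun ω => (q ^ X n ω - 1) / (q - 1) :=
      (measurable_from_top (f := φ)).comp (hm n)
    exact this.aestronglyMeasurable
  rw [integral_eq_lintegral_of_nonneg_ae hnn hmeas]
  refine ENNReal.toReal_le_of_le_ofReal (by positivity) ?_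
  have := hb n
  calc ∫⁻ ω, ENNReal.ofReal ((q ^ X n ω - 1) / (q - 1)) ∂P
      = ∫⁻ ω, g (X n ω) ∂P := rfl
    _ ≤ (n : ℝ≥0∞) := hb n
    _ = ENNReal.ofReal (n : ℝ) := by simp
end
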